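/- arXiv:math/0411449 — 6 statements merged into one kernel-verified Lean document; each statement's English description precedes it below -/
import Mathlib

section
/- Let u and v be monomials in S = K[x_1,…,x_n], and write v = x_{j_1}^{t_1} x_{j_2}^{t_2} ⋯ x_{j_l}^{t_l} with j_1 < j_2 < … < j_l and t_k ≥ 1 for all k. If v^σ divides u^σ, then there exist integers m_1,…,m_l ≥ 0 such that x_{j_1−m_1}^{t_1} x_{j_2−m_2}^{t_2} ⋯ x_{j_l−m_l}^{t_l} divides u. -/
open MvPolynomial

/-! ### Simplicial complexes and Stanley-Reisner ideals -/

/-- A simplicial complex on the vertex set `Fin n`: contains all singletons and is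
closed under taking subsets. -/
def IsSimplicialComplex {n : ℕ} (Δ : Set (Finset (Fin n))) : Prop :=
  (∀ i : Fin n, {i} ∈ Δ) ∧ ∀ σ ∈ Δ, ∀ τ : Finset (Fin n), τ ⊆ σ → τ ∈ Δ

/-- The Stanley-Reisner ideal of `Δ` in `K[x_1,…,x_n]`, generated by the squarefree
monomials `x_σ` corresponding to nonfaces `σ ∉ Δ`. -/
noncomputable def srIdeal (K : Type) [Field K] {n : ℕ} (Δ : Set (Finset (Fin n))) :
    Ideal (MvPolynomial (Fin n) K) :=
  Ideal.span { u | ∃ σ : Finset (Fin n), σ ∉ Δ ∧ u = ∏ i ∈ σ, X i }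

/-- A minimal nonface of `Δ`: a nonface all of whose proper subsets are faces. -/
def IsMinNonface {n : ℕ} (Δ : Set (Finset (Fin n))) (σ : Finset (Fin n)) : Prop :=
  σ ∉ Δ ∧ ∀ τ : Finset (Fin n), τ ⊂ σ → τ ∈ Δ

/-! ### Monomial ideals, stability -/

/-- `I` is a monomial ideal: generated by monomials. -/
def IsMonomialIdeal (K : Type) [Field K] {ι : Type} (I : Ideal (MvPolynomial ι K)) : Prop :=
  ∃ A : Set (ι →₀ ℕ), I = Ideal.span ((fun a => monomial a (1 : K)) '' A)

/-- A squarefree exponent vector. -/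
def IsSqfreeExp {ι : Type} (a : ι →₀ ℕ) : Prop := ∀ i, a i ≤ 1

/-- `I` is a squarefree monomial ideal: generated by squarefree monomials. -/
def IsSqfreeMonomialIdeal (K : Type) [Field K] {ι : Type} (I : Ideal (MvPolynomial ι K)) : Prop :=
  ∃ A : Set (ι →₀ ℕ), (∀ a ∈ A, IsSqfreeExp a) ∧
    I = Ideal.span ((fun a => monomial a (1 : K)) '' A)

/-- The exponent of `x_i · (u / x_m)` where `u` has exponent `a`. -/
noncomputable def exchExp {ι : Type} [DecidableEq ι] (a : ι →₀ ℕ) (i m : ι) : ι →₀ ℕ :=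
  a + Finsupp.single i 1 - Finsupp.single m 1

/-- A monomial ideal `I` is stable: for every monomial `u ∈ I` and every `i < m(u)`
(where `m(u)` is the largest variable index occurring in `u`), `x_i·(u/x_{m(u)}) ∈ I`. -/
def IsStableIdeal (K : Type) [Field K] {ι : Type} [LinearOrder ι]
    (I : Ideal (MvPolynomial ι K)) : Prop :=
  IsMonomialIdeal K I ∧
    ∀ a : ι →₀ ℕ, monomial a (1 : K) ∈ I →
      ∀ m i : ι, m ∈ a.support → (∀ k ∈ a.support, k ≤ m) → i < m →
        monomial (exchExp a i m) (1 : K) ∈ I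

/-- A squarefree monomial ideal `I` is squarefree stable: for every squarefree monomial
`u ∈ I` and every `i < m(u)` with `x_i ∤ u`, `x_i·(u/x_{m(u)}) ∈ I`. -/
def IsSqfreeStableIdeal (K : Type) [Field K] {ι : Type} [LinearOrder ι]
    (I : Ideal (MvPolynomial ι K)) : Prop :=
  IsSqfreeMonomialIdeal K I ∧
    ∀ a : ι →₀ ℕ, IsSqfreeExp a → monomial a (1 : K) ∈ I →
      ∀ m i : ι, m ∈ a.support → (∀ k ∈ a.support, k ≤ m) → i < m → i ∉ a.support →
        monomial (exchExp a i m) (1 : K) ∈ I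

/-- The minimal system of monomial generators of a monomial ideal: the monomials of `I`
having no proper monomial divisor inside `I`. -/
def minGens (K : Type) [Field K] {ι : Type} (I : Ideal (MvPolynomial ι K)) :
    Set (MvPolynomial ι K) :=
  { u | ∃ a : ι →₀ ℕ, u = monomial a (1 : K) ∧ u ∈ I ∧
      ∀ b : ι →₀ ℕ, b ≤ a → b ≠ a → monomial b (1 : K) ∉ I }

/-- `m(u)`, 1-based: the largest index (in `{1,…,n}`) of a variable dividing the monomial
with exponent `a` (equals `0` if `a = 0`). -/
def maxIdx {n : ℕ} (a : Fin n →₀ ℕ) : ℕ := a.support.sup (fun i => i.val + 1)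

/-- The degree of the monomial with exponent `a`. -/
def degExp {ι : Type} (a : ι →₀ ℕ) : ℕ := a.sum fun _ e => e

/-- The ideal `I_{⟨j⟩}` generated by the degree-`j` component of `I`. -/
noncomputable def componentIdeal (K : Type) [Field K] {ι : Type} (I : Ideal (MvPolynomial ι K)) (j : ℕ) :
    Ideal (MvPolynomial ι K) :=
  Ideal.span { f | f ∈ I ∧ f.IsHomogeneous j }

/-- `I` is generated in degree `j`. -/
def GeneratedInDegree (K : Type) [Field K] {ι : Type} (I : Ideal (MvPolynomial ι K))
    (j : ℕ) : Prop :=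
  I = Ideal.span { f | f ∈ I ∧ f.IsHomogeneous j }

/-! ### The reverse lexicographic order and generic initial ideals -/

/-- `a` is smaller than `b` in the (degree) reverse lexicographic order induced by
`x_1 > x_2 > … > x_n`. -/
def rvlt {n : ℕ} (a b : Fin n →₀ ℕ) : Prop :=
  degExp a < degExp b ∨
    (degExp a = degExp b ∧ ∃ k : Fin n, b k < a k ∧ ∀ m : Fin n, k < m → a m = b m)

/-- `a` is the exponent of the leading monomial of `f` with respect to the reverse
lexicographic order. -/
def IsLeadExp {n : ℕ} {K : Type} [Field K] (f : MvPolynomial (Fin n) K) (a : Fin n →₀ ℕ) :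
    Prop :=
  a ∈ f.support ∧ ∀ b ∈ f.support, b = a ∨ rvlt b a

/-- The initial ideal of `I` with respect to the reverse lexicographic order: the ideal
generated by the leading monomials of the nonzero elements of `I`. -/
noncomputable def inIdeal {n : ℕ} (K : Type) [Field K] (I : Ideal (MvPolynomial (Fin n) K)) :
    Ideal (MvPolynomial (Fin n) K) :=
  Ideal.span { u | ∃ f ∈ I, f ≠ 0 ∧ ∃ a : Fin n →₀ ℕ, IsLeadExp f a ∧ u = monomial a (1 : K) }

/-- The linear change of coordinates `x_i ↦ ∑_j g_{ij} x_j` on `K[x_1,…,x_n]`. -/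
noncomputable def changeOfVars (K : Type) [Field K] {n : ℕ} (g : Matrix (Fin n) (Fin n) K) :
    MvPolynomial (Fin n) K →ₐ[K] MvPolynomial (Fin n) K :=
  aeval (fun i => ∑ j, C (g i j) * X j)

/-- `J` is the generic initial ideal of `I` with respect to the reverse lexicographic
order: there is a nonempty Zariski-open subset `U` of `GL_n(K)` (the nonvanishing locus
of a nonzero polynomial `p` in the matrix entries) such that `in(g·I) = J` for all
`g ∈ U`. -/
def IsGin {n : ℕ} (K : Type) [Field K] (I J : Ideal (MvPolynomial (Fin n) K)) : Prop :=
  ∃ p : MvPolynomial (Fin n × Fin n) K, p ≠ 0 ∧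
    ∀ g : Matrix (Fin n) (Fin n) K, IsUnit g.det →
      eval (fun q : Fin n × Fin n => g q.1 q.2) p ≠ 0 →
        inIdeal K (Ideal.map (changeOfVars K g) I) = J

/-- `I` is Borel-fixed: fixed by every invertible linear change of coordinates sending
each variable into the span of the variables with smaller or equal index (the Borel
group of upper triangular matrices). -/
def IsBorelFixed {n : ℕ} (K : Type) [Field K] (I : Ideal (MvPolynomial (Fin n) K)) : Prop :=
  ∀ g : Matrix (Fin n) (Fin n) K, IsUnit g.det → (∀ i j : Fin n, i < j → g i j = 0) →
    Ideal.map (changeOfVars K g) I = I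

/-! ### Graded Betti numbers via the Koszul complex

For a graded ideal `I ⊆ S = K[x_1,…,x_n]`, the graded Betti number satisfies
`β_{i,j}(I) = dim_K Tor_i^S(I, K)_j`, which is computed as the degree-`j` strand of the
homology of the Koszul complex `K(x_1,…,x_n; S) ⊗_S I`. -/

/-- The degree-`d` homogeneous component of `I`, as a `K`-subspace. -/
noncomputable def degPiece {n : ℕ} (K : Type) [Field K] (I : Ideal (MvPolynomial (Fin n) K))
    (d : ℤ) : Submodule K (MvPolynomial (Fin n) K) :=
  if 0 ≤ d then
    (Submodule.restrictScalars K (I : Submodule (MvPolynomial (Fin n) K) (MvPolynomial (Fin n) K)))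
      ⊓ homogeneousSubmodule (Fin n) K d.toNat
  else ⊥

/-- The Koszul differential on `⋀ S^n ⊗ S`, with basis components indexed by subsets of
variables: `(D f)(t) = ∑_{a ∉ t} (-1)^{|{b ∈ t : b < a}|} x_a · f(t ∪ {a})`. -/
noncomputable def koszulD (n : ℕ) (K : Type) [Field K] :
    (Finset (Fin n) → MvPolynomial (Fin n) K) →ₗ[K] (Finset (Fin n) → MvPolynomial (Fin n) K) where
  toFun f t := ∑ a : Fin n, if a ∈ t then 0 else
    ((-1 : K) ^ (t.filter (fun b => b < a)).card) • (X a * f (insert a t))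
  map_add' f g := by
    funext t
    rw [Pi.add_apply, ← Finset.sum_add_distrib]
    refine Finset.sum_congr rfl fun a _ => ?_
    by_cases h : a ∈ t <;> simp [h, mul_add, smul_add]
  map_smul' c f := by
    funext t
    simp only [RingHom.id_apply, Pi.smul_apply, Finset.smul_sum]
    refine Finset.sum_congr rfl fun a _ => ?_
    by_cases h : a ∈ t <;> simp [h, mul_smul_comm, smul_comm c]

/-- The degree-`j` strand of homological degree `i` of the Koszul complex tensored with
`I`: functions supported on `i`-element subsets `s`, with values in the homogeneous
component `I_{j-i}` (the basis element `e_s` has internal degree `i`). -/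
noncomputable def koszulStrand {n : ℕ} (K : Type) [Field K]
    (I : Ideal (MvPolynomial (Fin n) K)) (i j : ℕ) :
    Submodule K (Finset (Fin n) → MvPolynomial (Fin n) K) :=
  Submodule.pi Set.univ
    (fun s : Finset (Fin n) => if s.card = i then degPiece K I ((j : ℤ) - (i : ℤ)) else ⊥)

/-- The graded Betti number `β_{i,j}(I) = dim_K Tor_i^S(I,K)_j`, computed as the dimension
of the degree-`j` strand of the `i`-th Koszul homology of `I`:
`dim (ker D ∩ strand_{i,j}) − dim D(strand_{i+1,j})`. -/
noncomputable def betti {n : ℕ} (K : Type) [Field K] (I : Ideal (MvPolynomial (Fin n) K))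
    (i j : ℕ) : ℕ :=
  Module.finrank K ↥(LinearMap.ker (koszulD n K) ⊓ koszulStrand K I i j) -
    Module.finrank K ↥(Submodule.map (koszulD n K) (koszulStrand K I (i + 1) j))

/-! ### The squarefree operator `σ` -/

/-- The support of `u^σ`: if `u = x_{i_1}⋯x_{i_d}` with `i_1 ≤ … ≤ i_d` (0-based indices),
then `u^σ = x_{i_1}x_{i_2+1}⋯x_{i_d+(d-1)}`, a squarefree monomial in variables indexed
by `ℕ`. -/
noncomputable def sigmaSupport {n : ℕ} (a : Fin n →₀ ℕ) : Finset ℕ :=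
  (((Finsupp.toMultiset a).sort (· ≤ ·)).zipIdx.map (fun p => p.1.val + p.2)).toFinset

/-- The squarefree monomial `u^σ`, in the polynomial ring `K[x_0,x_1,…]` with variables
indexed by `ℕ`. -/
noncomputable def sigmaMonomialNat (K : Type) [Field K] {n : ℕ} (a : Fin n →₀ ℕ) :
    MvPolynomial ℕ K :=
  ∏ t ∈ sigmaSupport a, X t

/-- The squarefree monomial `u^σ`, viewed in `K[x_1,…,x_N]` (meaningful when `u^σ`
involves only the first `N` variables). -/
noncomputable def sigmaMonomialFin (K : Type) [Field K] {n : ℕ} (N : ℕ) (a : Fin n →₀ ℕ) :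
    MvPolynomial (Fin N) K :=
  ∏ t ∈ sigmaSupport a, if h : t < N then X (⟨t, h⟩ : Fin N) else 1

/-- The ideal `I^σ` generated by the squarefree monomials `u^σ`, `u ∈ G(I)`, in the
polynomial ring with variables indexed by `ℕ`. -/
noncomputable def sigmaIdealNat (K : Type) [Field K] {n : ℕ}
    (I : Ideal (MvPolynomial (Fin n) K)) : Ideal (MvPolynomial ℕ K) :=
  Ideal.span { u | ∃ a : Fin n →₀ ℕ, monomial a (1 : K) ∈ minGens K I ∧ u = sigmaMonomialNat K a }

/-- The variable `x_{k-m}` (with truncated subtraction of indices). -/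
def shiftVar {n : ℕ} (k : Fin n) (m : ℕ) : Fin n :=
  ⟨k.val - m, lt_of_le_of_lt (Nat.sub_le _ _) k.isLt⟩

/-! ### Combinatorial shifting -/

open Classical in
/-- The combinatorial shifting operation `S_{kl}` on nonfaces. -/
noncomputable def Skl {n : ℕ} (Δ : Set (Finset (Fin n))) (k l : Fin n) (σ : Finset (Fin n)) :
    Finset (Fin n) :=
  if l ∈ σ ∧ k ∉ σ ∧ insert k (σ.erase l) ∈ Δ then insert k (σ.erase l) else σ

/-- `Shift_{kl}(Δ)`: the simplicial complex whose nonfaces are the supersets of the sets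
`S_{kl}(σ)`, `σ ∉ Δ`; its Stanley–Reisner ideal is generated by the `x_{S_{kl}(σ)}`. -/
noncomputable def ShiftKl {n : ℕ} (Δ : Set (Finset (Fin n))) (k l : Fin n) :
    Set (Finset (Fin n)) :=
  { τ | ¬ ∃ σ : Finset (Fin n), σ ∉ Δ ∧ Skl Δ k l σ ⊆ τ }

/-- The stability condition for a simplicial complex: for every nonface `σ` and every
`i < m(σ)` with `i ∉ σ`, `(σ∖{m(σ)})∪{i}` is again a nonface. -/
def IsStableComplex {n : ℕ} (Δ : Set (Finset (Fin n))) : Prop :=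
  IsSimplicialComplex Δ ∧
    ∀ σ : Finset (Fin n), σ ∉ Δ → ∀ m i : Fin n, m ∈ σ → (∀ k ∈ σ, k ≤ m) → i < m → i ∉ σ →
      insert i (σ.erase m) ∉ Δ

/-- A shifted simplicial complex. -/
def IsShifted {n : ℕ} (Δ : Set (Finset (Fin n))) : Prop :=
  IsSimplicialComplex Δ ∧
    ∀ σ ∈ Δ, ∀ j ∈ σ, ∀ i : Fin n, i < j → i ∉ σ → insert i (σ.erase j) ∈ Δ

/-- `Δc` is a combinatorial shifted complex of `Δ`: a shifted complex obtained from `Δ`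
by finitely many (at least one) operations `Shift_{kl}`. -/
noncomputable def IsCombShifted {n : ℕ} (Δ Δc : Set (Finset (Fin n))) : Prop :=
  IsShifted Δc ∧ ∃ L : List (Fin n × Fin n), L ≠ [] ∧ (∀ p ∈ L, p.1 < p.2) ∧
    Δc = L.foldl (fun D p => ShiftKl D p.1 p.2) Δ

/-- `σ*`, as a relation: `σ* = σ_s ∪ τ` if `σ = S_{kl}(σ_s) ∪ τ` for some minimal nonface
`σ_s ≠ σ` with `S_{kl}(σ_s) ∩ τ = ∅` and `σ_s < τ`, and `σ* = S_{kl}(σ)` otherwise. -/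
def IsStar {n : ℕ} (Δ : Set (Finset (Fin n))) (k l : Fin n) (σ σstar : Finset (Fin n)) :
    Prop :=
  (∃ σs τ : Finset (Fin n), IsMinNonface Δ σs ∧ σs ≠ σ ∧ σ = Skl Δ k l σs ∪ τ ∧
      Disjoint (Skl Δ k l σs) τ ∧ (∀ a ∈ σs, ∀ b ∈ τ, a < b) ∧ σstar = σs ∪ τ) ∨
  ((¬ ∃ σs τ : Finset (Fin n), IsMinNonface Δ σs ∧ σs ≠ σ ∧ σ = Skl Δ k l σs ∪ τ ∧
      Disjoint (Skl Δ k l σs) τ ∧ (∀ a ∈ σs, ∀ b ∈ τ, a < b)) ∧ σstar = Skl Δ k l σ)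

/-! ### Exterior algebra: exterior face ideals and exterior generic initial ideals -/

/-- The exterior monomial `e_σ = e_{i_1} ∧ ⋯ ∧ e_{i_r}` for `σ = {i_1 < … < i_r}`, in the
exterior algebra on `K^n`. -/
noncomputable def eMon (K : Type) [Field K] {n : ℕ} (σ : Finset (Fin n)) :
    ExteriorAlgebra K (Fin n → K) :=
  ((σ.sort (· ≤ ·)).map (fun i => ExteriorAlgebra.ι K (Pi.single i (1 : K)))).prod

/-- The exterior Stanley–Reisner ideal `J_Δ ⊆ E = ⋀(K^n)`, generated by the `e_σ` for
nonfaces `σ`. -/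
noncomputable def extIdeal (K : Type) [Field K] {n : ℕ} (Δ : Set (Finset (Fin n))) :
    Ideal (ExteriorAlgebra K (Fin n → K)) :=
  Ideal.span { u | ∃ σ : Finset (Fin n), σ ∉ Δ ∧ u = eMon K σ }

/-- The reverse lexicographic order on squarefree (exterior) monomials. -/
def rvltF {n : ℕ} (s t : Finset (Fin n)) : Prop :=
  s.card < t.card ∨
    (s.card = t.card ∧ ∃ k : Fin n, k ∈ s ∧ k ∉ t ∧ ∀ m : Fin n, k < m → (m ∈ s ↔ m ∈ t))

/-- `e_σ` is the leading (exterior) monomial of `f ∈ E` with respect to the reverse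
lexicographic order: `f` lies in the span of the monomials `≤ e_σ` but not in the span of
the monomials `< e_σ`. -/
def IsLeadMonE (K : Type) [Field K] {n : ℕ} (f : ExteriorAlgebra K (Fin n → K))
    (σ : Finset (Fin n)) : Prop :=
  f ∈ Submodule.span K (eMon K '' { τ | τ = σ ∨ rvltF τ σ }) ∧
    f ∉ Submodule.span K (eMon K '' { τ | rvltF τ σ })

/-- The initial ideal of an ideal `J ⊆ E` with respect to the reverse lexicographic
order. -/
noncomputable def inIdealE (K : Type) [Field K] {n : ℕ}
    (J : Ideal (ExteriorAlgebra K (Fin n → K))) : Ideal (ExteriorAlgebra K (Fin n → K)) :=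
  Ideal.span { u | ∃ f ∈ J, ∃ σ : Finset (Fin n), IsLeadMonE K f σ ∧ u = eMon K σ }

/-- The algebra endomorphism of `E` induced by the linear map `g : K^n → K^n`. -/
noncomputable def emap (K : Type) [Field K] {n : ℕ} (g : Matrix (Fin n) (Fin n) K) :
    ExteriorAlgebra K (Fin n → K) →ₐ[K] ExteriorAlgebra K (Fin n → K) :=
  ExteriorAlgebra.lift K
    ⟨(ExteriorAlgebra.ι K).comp g.mulVecLin, fun _ => ExteriorAlgebra.ι_sq_zero _⟩

/-- `J'` is the generic initial ideal of `J` in the exterior algebra `E`, with respect to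
the reverse lexicographic order. -/
def IsGinE (K : Type) [Field K] {n : ℕ} (J J' : Ideal (ExteriorAlgebra K (Fin n → K))) :
    Prop :=
  ∃ p : MvPolynomial (Fin n × Fin n) K, p ≠ 0 ∧
    ∀ g : Matrix (Fin n) (Fin n) K, IsUnit g.det →
      eval (fun q : Fin n × Fin n => g q.1 q.2) p ≠ 0 →
        inIdealE K (Ideal.map (emap K g) J) = J'

private lemma aux_count_fin {α : Type} [DecidableEq α] (l : List α) (x : α) :
    (Finset.univ.filter fun p : Fin l.length => l.get p = x).card = l.count x := by
  classical
  have hcoe : (l : Multiset α) = Multiset.map l.get (Finset.univ.val) := by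
    rw [Fin.univ_def]
    show (l : Multiset α) = Multiset.map l.get (↑(List.finRange l.length))
    rw [Multiset.map_coe, ← List.ofFn_eq_map, List.ofFn_get]
  have h2 := Multiset.count_map l.get (Finset.univ.val : Multiset (Fin l.length)) x
  rw [← hcoe, Multiset.coe_count] at h2
  rw [h2, Finset.card_def, Finset.filter_val]
  congr 1
  exact Multiset.filter_congr fun p _ => eq_comm

private lemma aux_strictMono_le {e d : ℕ} {f : Fin e → Fin d} (hf : StrictMono f)
    (s : Fin e) : (s : ℕ) ≤ (f s : ℕ) := by
  suffices h : ∀ m : ℕ, ∀ s : Fin e, (s : ℕ) = m → m ≤ (f s : ℕ) from h s.val s rfl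
  intro m
  induction m with
  | zero => intro s _; exact Nat.zero_le _
  | succ k ih =>
    intro s hs
    have hk : k < e := by omega
    have h1 : (⟨k, hk⟩ : Fin e) < s := by rw [Fin.lt_def]; simp; omega
    have h2 := ih ⟨k, hk⟩ rfl
    have h3 := Fin.lt_def.mp (hf h1)
    omega

/-- Let `u`, `v` be monomials in `S` with exponent vectors `a`, `b`,
where `v = x_{j_1}^{t_1}⋯x_{j_l}^{t_l}` (`j_1 < … < j_l`). If `v^σ` divides `u^σ`, then
there are integers `m_1,…,m_l ≥ 0` such that `x_{j_1−m_1}^{t_1}⋯x_{j_l−m_l}^{t_l}`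
divides `u`. -/
theorem sigma_dvd_sigma (n : ℕ) (K : Type) [Field K] (a b : Fin n →₀ ℕ)
    (h : sigmaMonomialNat K b ∣ sigmaMonomialNat K a) :
    ∃ mshift : Fin n → ℕ,
      (∑ k ∈ b.support, Finsupp.single (shiftVar k (mshift k)) (b k)) ≤ a := by
  classical
  have hsa : ((Finsupp.toMultiset a).sort (· ≤ ·)).Pairwise (· ≤ ·) :=
    Multiset.pairwise_sort _ _
  have hsb : ((Finsupp.toMultiset b).sort (· ≤ ·)).Pairwise (· ≤ ·) :=
    Multiset.pairwise_sort _ _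
  set La : List (Fin n) := (Finsupp.toMultiset a).sort (· ≤ ·) with hLa
  set Lb : List (Fin n) := (Finsupp.toMultiset b).sort (· ≤ ·) with hLb
  have hacnt : ∀ i : Fin n, La.count i = a i := by
    intro i
    rw [← Multiset.coe_count, hLa, Multiset.sort_eq, Finsupp.count_toMultiset]
  have hbcnt : ∀ k : Fin n, Lb.count k = b k := by
    intro k
    rw [← Multiset.coe_count, hLb, Multiset.sort_eq, Finsupp.count_toMultiset]
  -- sigma monomials are monomials
  have key : ∀ m : Fin n →₀ ℕ, sigmaMonomialNat K m
      = monomial (∑ t ∈ sigmaSupport m, Finsupp.single t 1) (1 : K) := by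
    intro m
    unfold sigmaMonomialNat
    rw [monomial_sum_one]
    exact Finset.prod_congr rfl fun t _ => by rw [← X_pow_eq_monomial, pow_one]
  -- Step 1: divisibility gives inclusion of sigma supports
  have hsub : sigmaSupport b ⊆ sigmaSupport a := by
    intro t ht
    rw [key b, key a, monomial_dvd_monomial] at h
    rcases h with ⟨h1 | h1, -⟩
    · exact absurd h1 one_ne_zero
    · have hv : ∀ (S : Finset ℕ) (t0 : ℕ),
          (∑ s ∈ S, Finsupp.single s (1 : ℕ)) t0 = if t0 ∈ S then 1 else 0 := by
        intro S t0
        rw [Finsupp.finset_sum_apply]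
        simp only [Finsupp.single_apply]
        exact Finset.sum_ite_eq' S t0 (fun _ => 1)
      have h2 := Finsupp.le_def.mp h1 t
      rw [hv, hv, if_pos ht] at h2
      by_contra hta
      rw [if_neg hta] at h2
      omega
  -- membership in sigmaSupport
  have hmem : ∀ (m : Fin n →₀ ℕ) (x : ℕ),
      x ∈ sigmaSupport m ↔
        ∃ p : Fin ((Finsupp.toMultiset m).sort (· ≤ ·)).length,
          ((((Finsupp.toMultiset m).sort (· ≤ ·)).get p : Fin n) : ℕ) + (p : ℕ) = x := by
    intro m x
    unfold sigmaSupport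
    rw [List.mem_toFinset, List.mem_iff_getElem]
    constructor
    · rintro ⟨i, hi, hx⟩
      rw [List.length_map, List.length_zipIdx] at hi
      refine ⟨⟨i, hi⟩, ?_⟩
      rw [List.getElem_map, List.getElem_zipIdx] at hx
      simpa [List.get_eq_getElem] using hx
    · rintro ⟨p, hp⟩
      refine ⟨p.val, ?_, ?_⟩
      · rw [List.length_map, List.length_zipIdx]; exact p.isLt
      · rw [List.getElem_map, List.getElem_zipIdx]
        simpa [List.get_eq_getElem] using hp
  -- the position function of `a` is strictly monotone
  have hfa : StrictMono (fun p : Fin La.length => ((La.get p : Fin n) : ℕ) + (p : ℕ)) := by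
    intro p q hpq
    have h1 : ((La.get p : Fin n) : ℕ) ≤ ((La.get q : Fin n) : ℕ) :=
      hsa.sortedLE.monotone_get (le_of_lt hpq)
    have h2 := Fin.lt_def.mp hpq
    simp only []
    omega
  -- choose the position map φ
  have hexφ : ∀ s : Fin Lb.length, ∃ p : Fin La.length,
      ((La.get p : Fin n) : ℕ) + (p : ℕ) = ((Lb.get s : Fin n) : ℕ) + (s : ℕ) := by
    intro s
    have h1 : (((Lb.get s : Fin n) : ℕ) + (s : ℕ)) ∈ sigmaSupport b :=
      (hmem b _).mpr ⟨s, rfl⟩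
    exact (hmem a _).mp (hsub h1)
  choose φ hφ using hexφ
  -- φ is strictly monotone
  have hφm : StrictMono φ := by
    intro s t hst
    have h0 : ((Lb.get s : Fin n) : ℕ) ≤ ((Lb.get t : Fin n) : ℕ) :=
      hsb.sortedLE.monotone_get (le_of_lt hst)
    have h1 : ((Lb.get s : Fin n) : ℕ) + (s : ℕ) < ((Lb.get t : Fin n) : ℕ) + (t : ℕ) := by
      have := Fin.lt_def.mp hst; omega
    rw [← hφ s, ← hφ t] at h1
    by_contra hc
    push_neg at hc
    have h2 := hfa.monotone hc
    omega
  -- one step of block constancy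
  have hstep : ∀ s t : Fin Lb.length, (s : ℕ) + 1 = (t : ℕ) → Lb.get s = Lb.get t →
      La.get (φ t) = La.get (φ s) := by
    intro s t hst heq
    have h1 : (φ s : ℕ) + 1 ≤ (φ t : ℕ) :=
      Fin.lt_def.mp (hφm (show s < t by rw [Fin.lt_def]; omega))
    have hplt : (φ s : ℕ) + 1 < La.length := lt_of_le_of_lt h1 (φ t).isLt
    set p' : Fin La.length := ⟨(φ s : ℕ) + 1, hplt⟩ with hp'
    have hm1 : ((La.get (φ s) : Fin n) : ℕ) ≤ ((La.get p' : Fin n) : ℕ) :=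
      hsa.sortedLE.monotone_get (by rw [Fin.le_def]; simp [hp'])
    have hm2 : ((La.get p' : Fin n) : ℕ) + (p' : ℕ)
        ≤ ((La.get (φ t) : Fin n) : ℕ) + ((φ t) : ℕ) := by
      rcases eq_or_lt_of_le (show p' ≤ φ t by rw [Fin.le_def]; simpa [hp'] using h1)
        with he | hl
      · rw [he]
      · exact le_of_lt (hfa hl)
    have e1 := hφ s
    have e2 := hφ t
    have hq : ((Lb.get s : Fin n) : ℕ) = ((Lb.get t : Fin n) : ℕ) := congrArg Fin.val heq
    have hpv : (p' : ℕ) = (φ s : ℕ) + 1 := rfl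
    have hfp' : ((La.get p' : Fin n) : ℕ) + (p' : ℕ)
        = ((La.get (φ t) : Fin n) : ℕ) + ((φ t) : ℕ) := by omega
    have hpt : p' = φ t := hfa.injective hfp'
    have hLeq : La.get (φ t) = La.get p' := by rw [hpt]
    rw [hLeq]
    have hval : ((La.get p' : Fin n) : ℕ) = ((La.get (φ s) : Fin n) : ℕ) := by omega
    exact Fin.val_injective hval
  -- block constancy over a gap
  have hblock : ∀ j : ℕ, ∀ s t : Fin Lb.length, (s : ℕ) + j = (t : ℕ) →
      Lb.get s = Lb.get t → La.get (φ s) = La.get (φ t) := by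
    intro j
    induction j with
    | zero =>
      intro s t hst _
      have hst' : s = t := Fin.ext (by omega)
      rw [hst']
    | succ k ih =>
      intro s t hst heq
      have hs1 : (s : ℕ) + 1 < Lb.length := by have := t.isLt; omega
      have hle1 : Lb.get s ≤ Lb.get (⟨(s : ℕ) + 1, hs1⟩ : Fin Lb.length) :=
        hsb.sortedLE.monotone_get (by rw [Fin.le_def]; simp)
      have hle2 : Lb.get (⟨(s : ℕ) + 1, hs1⟩ : Fin Lb.length) ≤ Lb.get t :=
        hsb.sortedLE.monotone_get (by rw [Fin.le_def]; simp; omega)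
      have hss' : Lb.get s = Lb.get (⟨(s : ℕ) + 1, hs1⟩ : Fin Lb.length) :=
        le_antisymm hle1 (by rw [← heq] at hle2; exact hle2)
      calc La.get (φ s) = La.get (φ (⟨(s : ℕ) + 1, hs1⟩ : Fin Lb.length)) :=
            (hstep s _ rfl hss').symm
        _ = La.get (φ t) := ih _ t (by simp; omega) (by rw [← hss']; exact heq)
  have hconst : ∀ s t : Fin Lb.length, Lb.get s = Lb.get t →
      La.get (φ s) = La.get (φ t) := by
    intro s t heq
    rcases le_total (s : ℕ) (t : ℕ) with hle | hle
    · exact hblock ((t : ℕ) - (s : ℕ)) s t (by omega) heq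
    · exact (hblock ((s : ℕ) - (t : ℕ)) t s (by omega) heq.symm).symm
  -- every variable of b occurs in Lb
  have hbsup : ∀ k ∈ b.support, ∃ s : Fin Lb.length, Lb.get s = k := by
    intro k hk
    have h1 : k ∈ Finsupp.toMultiset b := (Finsupp.mem_toMultiset b k).mpr hk
    rw [← Multiset.sort_eq (α := Fin n) (Finsupp.toMultiset b) (· ≤ ·), Multiset.mem_coe,
      List.mem_iff_get] at h1
    exact h1
  -- the target variable
  set target : Fin n → Fin n := fun k =>
    if hk : ∃ s : Fin Lb.length, Lb.get s = k then La.get (φ (Classical.choose hk)) else k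
    with htarget
  have htk : ∀ (k : Fin n) (s : Fin Lb.length), Lb.get s = k → target k = La.get (φ s) := by
    intro k s hs
    have hex' : ∃ s' : Fin Lb.length, Lb.get s' = k := ⟨s, hs⟩
    rw [htarget]
    simp only []
    rw [dif_pos hex']
    exact hconst (Classical.choose hex') s (by rw [Classical.choose_spec hex', hs])
  have hle : ∀ k ∈ b.support, (target k : ℕ) ≤ (k : ℕ) := by
    intro k hk
    obtain ⟨s, hs⟩ := hbsup k hk
    rw [htk k s hs]
    have h1 := hφ s
    have h2 := aux_strictMono_le hφm s
    have h3 : ((Lb.get s : Fin n) : ℕ) = (k : ℕ) := congrArg Fin.val hs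
    omega
  refine ⟨fun k => (k : ℕ) - (target k : ℕ), ?_⟩
  have hsv : ∀ k ∈ b.support,
      shiftVar k ((k : ℕ) - (target k : ℕ)) = target k := by
    intro k hk
    have h1 := hle k hk
    apply Fin.val_injective
    show (k : ℕ) - ((k : ℕ) - (target k : ℕ)) = (target k : ℕ)
    omega
  have hrw : (∑ k ∈ b.support,
        Finsupp.single (shiftVar k ((k : ℕ) - (target k : ℕ))) (b k))
      = ∑ k ∈ b.support, Finsupp.single (target k) (b k) :=
    Finset.sum_congr rfl fun k hk => by rw [hsv k hk]
  rw [hrw, Finsupp.le_def]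
  intro i
  rw [Finsupp.finset_sum_apply]
  simp only [Finsupp.single_apply]
  set T : Finset (Fin Lb.length) := Finset.univ.filter (fun s => La.get (φ s) = i) with hT
  have hmaps : ∀ s ∈ T, Lb.get s ∈ b.support := by
    intro s _
    have h1 : Lb.get s ∈ Lb := List.get_mem Lb s
    generalize hx : Lb.get s = x at h1 ⊢
    rw [← Multiset.mem_coe, hLb, Multiset.sort_eq, Finsupp.mem_toMultiset] at h1
    exact h1
  have hfiber : ∀ k ∈ b.support,
      (T.filter fun s => Lb.get s = k).card = if target k = i then b k else 0 := by
    intro k hk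
    by_cases hti : target k = i
    · rw [if_pos hti, ← hbcnt k, ← aux_count_fin Lb k]
      congr 1
      ext s
      simp only [hT, Finset.mem_filter, Finset.mem_univ, true_and]
      constructor
      · rintro ⟨-, h2⟩; exact h2
      · intro h2
        exact ⟨by rw [← htk k s h2, hti], h2⟩
    · rw [if_neg hti, Finset.card_eq_zero, Finset.eq_empty_iff_forall_notMem]
      intro s hs
      simp only [hT, Finset.mem_filter, Finset.mem_univ, true_and] at hs
      exact hti (by rw [htk k s hs.2, hs.1])
  calc ∑ k ∈ b.support, (if target k = i then b k else 0)
      = ∑ k ∈ b.support, (T.filter fun s => Lb.get s = k).card :=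
        Finset.sum_congr rfl fun k hk => (hfiber k hk).symm
    _ = T.card := (Finset.card_eq_sum_card_fiberwise hmaps).symm
    _ ≤ (Finset.univ.filter fun p : Fin La.length => La.get p = i).card := by
        apply Finset.card_le_card_of_injOn φ
        · intro s hs
          simp only [hT, Finset.coe_filter, Set.mem_setOf_eq, Finset.mem_filter, Finset.mem_univ, true_and] at hs ⊢
          exact hs
        · exact fun s _ t _ hst => hφm.injective hst
    _ = a i := by rw [aux_count_fin, hacnt]
end

section
/- Let I be a monomial ideal of S = K[x_1,…,x_n] that is stable and Borel-fixed, with minimal monomial generating set G(I) = {u_1,…,u_r}. Then the minimal monomial generating set of I^σ is exactly {u_1^σ, u_2^σ, …, u_r^σ}. -/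
open MvPolynomial

namespace SP

section Comb


variable {n : ℕ}

/-- number of entries (with multiplicity) with value `< x`. -/
def Acc (a : Fin n →₀ ℕ) (x : ℕ) : ℕ :=
  ∑ y ∈ Finset.univ.filter (fun y : Fin n => (y : ℕ) < x), a y

/-- first element contributed by variable x -/
def fe (a : Fin n →₀ ℕ) (x : Fin n) : ℕ := (x : ℕ) + Acc a (x : ℕ)

/-- block of `sigmaSupport` elements contributed by variable x -/
def Blk (a : Fin n →₀ ℕ) (x : Fin n) : Finset ℕ :=
  Finset.Ico (fe a x) (fe a x + a x)

noncomputable def L (a : Fin n →₀ ℕ) : List (Fin n) := (Finsupp.toMultiset a).sort (· ≤ ·)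

lemma sigmaSupport_def (a : Fin n →₀ ℕ) :
    sigmaSupport a = ((L a).zipIdx.map (fun p => p.1.val + p.2)).toFinset := rfl

lemma length_L (a : Fin n →₀ ℕ) : (L a).length = degExp a := by
  simp only [L, Multiset.length_sort, Finsupp.card_toMultiset]
  rfl

lemma L_split (a : Fin n →₀ ℕ) (x : Fin n) (hx : ∀ y ∈ a.support, y ≤ x) :
    L a = L (a.erase x) ++ List.replicate (a x) x := by
  refine (fun {l₁ l₂ : List (Fin n)} (p : l₁.Perm l₂) (s1 : l₁.Pairwise (· ≤ ·))
      (s2 : l₂.Pairwise (· ≤ ·)) => List.Perm.eq_of_pairwise' s1 s2 p) ?_ ?_ ?_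
  · rw [← Multiset.coe_eq_coe]
    rw [L, L, Multiset.sort_eq, ← Multiset.coe_add, Multiset.sort_eq, Multiset.coe_replicate,
      ← Multiset.nsmul_singleton, ← Finsupp.toMultiset_single, ← Finsupp.toMultiset_add,
      Finsupp.erase_add_single]
  · exact Multiset.pairwise_sort _ _
  · have h1 : List.Pairwise (· ≤ ·) (List.replicate (a x) x) :=
      List.pairwise_replicate.2 (Or.inr le_rfl)
    have h2 : ∀ u ∈ L (a.erase x), ∀ y ∈ List.replicate (a x) x, u ≤ y := by
      intro u hu y hy
      rw [List.eq_of_mem_replicate hy]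
      have hu' : u ∈ (a.erase x).support := by
        rw [← Finsupp.mem_toMultiset]
        exact (Multiset.mem_sort _).1 hu
      refine hx u ?_
      rw [Finsupp.support_erase] at hu'
      exact Finset.mem_of_mem_erase hu'
    have h0 : List.Pairwise (· ≤ ·) (L (a.erase x)) := Multiset.pairwise_sort _ _
    exact List.pairwise_append.2 ⟨h0, h1, h2⟩

lemma repl_toFinset (x : Fin n) : ∀ (r k : ℕ),
    (((List.replicate r x).zipIdx k).map (fun p : Fin n × ℕ => p.1.val + p.2)).toFinset
      = Finset.Ico ((x : ℕ) + k) ((x : ℕ) + k + r) := by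
  intro r
  induction r with
  | zero => intro k; simp
  | succ r ih =>
    intro k
    rw [List.replicate_succ, List.zipIdx_cons]
    simp only [List.map_cons, List.toFinset_cons, ih (k + 1)]
    ext e
    simp only [Finset.mem_insert, Finset.mem_Ico]
    omega
lemma Acc_erase (a : Fin n →₀ ℕ) (x : Fin n) (y : ℕ) (h : y ≤ x.val) :
    Acc (a.erase x) y = Acc a y := by
  refine Finset.sum_congr rfl fun z hz => ?_
  rw [Finset.mem_filter] at hz
  rw [Finsupp.erase_ne]
  intro hzx; subst hzx; omega

lemma degExp_eq (b : Fin n →₀ ℕ) : degExp b = ∑ y ∈ b.support, b y := rfl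

lemma Acc_top (a : Fin n →₀ ℕ) (x : Fin n) (hx : ∀ y ∈ a.support, y ≤ x) :
    Acc a x.val = degExp (a.erase x) := by
  have h1 : ∑ z ∈ a.support.erase x, (a.erase x) z = ∑ z ∈ a.support.erase x, a z :=
    Finset.sum_congr rfl fun z hz => Finsupp.erase_ne (Finset.ne_of_mem_erase hz)
  rw [degExp_eq, Finsupp.support_erase, h1, Acc]
  refine (Finset.sum_subset ?_ ?_).symm
  · intro z hz
    have hz1 := Finset.mem_of_mem_erase hz
    have hz2 := Finset.ne_of_mem_erase hz
    have h3 := hx z hz1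
    have h4 : z.val < x.val := by
      rcases lt_or_eq_of_le h3 with h | h
      · exact Fin.lt_iff_val_lt_val.1 h
      · exact absurd h hz2
    simp only [Finset.mem_filter, Finset.mem_univ, true_and]
    exact h4
  · intro z hz hz2
    have hzx : z ≠ x := by
      rw [Finset.mem_filter] at hz
      intro h; subst h; omega
    by_contra h
    exact hz2 (Finset.mem_erase.2 ⟨hzx, Finsupp.mem_support_iff.2 h⟩)

lemma acc_add_le (a : Fin n →₀ ℕ) (x y : Fin n) (hxy : x < y) :
    Acc a x.val + a x ≤ Acc a y.val := by
  have hx : x ∉ Finset.univ.filter (fun z : Fin n => (z : ℕ) < x.val) := by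
    simp
  have hsub : insert x (Finset.univ.filter (fun z : Fin n => (z : ℕ) < x.val)) ⊆
      Finset.univ.filter (fun z : Fin n => (z : ℕ) < y.val) := by
    intro z hz
    rcases Finset.mem_insert.1 hz with h | h
    · subst h
      simp only [Finset.mem_filter, Finset.mem_univ, true_and]
      exact Fin.lt_iff_val_lt_val.1 hxy
    · rw [Finset.mem_filter] at h ⊢
      have : (x : ℕ) < y := Fin.lt_iff_val_lt_val.1 hxy
      exact ⟨h.1, by omega⟩
  calc Acc a x.val + a x = ∑ z ∈ insert x (Finset.univ.filter (fun z : Fin n => (z : ℕ) < x.val)), a z := by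
        rw [Finset.sum_insert hx, Acc]; ring
    _ ≤ Acc a y.val := Finset.sum_le_sum_of_subset hsub

lemma blk_upper (a : Fin n →₀ ℕ) (x y : Fin n) (hxy : x < y) :
    fe a x + a x ≤ fe a y := by
  have h1 := acc_add_le a x y hxy
  have h2 : (x : ℕ) < y := hxy
  simp only [fe]; omega

lemma Blk_disjoint (a : Fin n →₀ ℕ) {x y : Fin n} (hxy : x ≠ y) :
    Disjoint (Blk a x) (Blk a y) := by
  rw [Finset.disjoint_left]
  intro e he he'
  rw [Blk, Finset.mem_Ico] at he he'
  rcases lt_or_gt_of_ne hxy with h | h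
  · have := blk_upper a x y h; omega
  · have := blk_upper a y x h; omega

lemma sigmaSupport_eq (a : Fin n →₀ ℕ) :
    sigmaSupport a = a.support.biUnion (Blk a) := by
  suffices H : ∀ (N : ℕ) (a : Fin n →₀ ℕ), a.support.card = N →
      sigmaSupport a = a.support.biUnion (Blk a) from H _ a rfl
  intro N
  induction N with
  | zero =>
    intro a ha
    rw [Finset.card_eq_zero] at ha
    have : a = 0 := Finsupp.support_eq_empty.1 ha
    subst this
    simp [sigmaSupport_def, L, sigmaSupport]
  | succ N ih =>
    intro a ha
    have hne : a.support.Nonempty := Finset.card_pos.1 (by omega)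
    set x := a.support.max' hne with hxdef
    have hxmem : x ∈ a.support := a.support.max'_mem hne
    have hxmax : ∀ y ∈ a.support, y ≤ x := fun y hy => Finset.le_max' _ y hy
    set a' := a.erase x with ha'def
    have hsupp' : a'.support = a.support.erase x := Finsupp.support_erase
    have hcard' : a'.support.card = N := by
      rw [hsupp', Finset.card_erase_of_mem hxmem, ha]
      omega
    have IH := ih a' hcard'
    have hd' : (L a').length = Acc a x.val := by
      rw [length_L, Acc_top a x hxmax]
    have key : sigmaSupport a = sigmaSupport a' ∪ Blk a x := by
      rw [sigmaSupport_def, L_split a x hxmax, List.zipIdx_append, List.map_append,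
        List.toFinset_append, repl_toFinset, hd', Nat.zero_add, ← sigmaSupport_def]
      congr 1
    have hsupp : a.support = insert x a'.support := by
      rw [hsupp', Finset.insert_erase hxmem]
    rw [key, hsupp, Finset.biUnion_insert, IH]
    rw [Finset.union_comm]
    congr 1
    apply Finset.biUnion_congr rfl
    intro y hy
    have hyx : y ≠ x := by
      rw [hsupp'] at hy; exact Finset.ne_of_mem_erase hy
    have hylt : y < x := lt_of_le_of_ne (hxmax y (by rw [hsupp'] at hy; exact Finset.mem_of_mem_erase hy)) hyx
    rw [Blk, Blk, fe, fe, Acc_erase a x y.val (le_of_lt hylt), ha'def, Finsupp.erase_ne hyx]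

lemma card_sigmaSupport (a : Fin n →₀ ℕ) : (sigmaSupport a).card = degExp a := by
  rw [sigmaSupport_eq, Finset.card_biUnion (fun x _ y _ hxy => Blk_disjoint a hxy), degExp_eq]
  refine Finset.sum_congr rfl fun x _ => ?_
  rw [Blk, Nat.card_Ico]
  omega
def rk (S : Finset ℕ) (e : ℕ) : ℕ := (S.filter (· < e)).card

def vl (S : Finset ℕ) (e : ℕ) : ℕ := e - rk S e

lemma rk_le (S : Finset ℕ) (e : ℕ) : rk S e ≤ e := by
  have h : S.filter (· < e) ⊆ Finset.range e := by
    intro z hz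
    rw [Finset.mem_filter] at hz
    exact Finset.mem_range.2 hz.2
  simpa [rk] using Finset.card_le_card h

lemma rk_succ (S : Finset ℕ) (e : ℕ) (he : e ∈ S) : rk S (e + 1) = rk S e + 1 := by
  have h : S.filter (· < e + 1) = insert e (S.filter (· < e)) := by
    ext z
    simp only [Finset.mem_filter, Finset.mem_insert]
    constructor
    · rintro ⟨hz, hlt⟩
      rcases Nat.lt_or_ge z e with h | h
      · exact Or.inr ⟨hz, h⟩
      · exact Or.inl (by omega)
    · rintro (h | ⟨hz, hlt⟩)
      · subst h; exact ⟨he, by omega⟩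
      · exact ⟨hz, by omega⟩
  rw [rk, h, Finset.card_insert_of_notMem (by simp), rk]

lemma vl_succ (S : Finset ℕ) (e : ℕ) (he : e ∈ S) : vl S (e + 1) = vl S e := by
  have := rk_le S e
  rw [vl, vl, rk_succ S e he]
  omega

lemma vl_const (S : Finset ℕ) (f r : ℕ) (h : ∀ t, t < r → f + t ∈ S) :
    ∀ s, s < r → vl S (f + s) = vl S f := by
  intro s
  induction s with
  | zero => intro _; rfl
  | succ s ih =>
    intro hs
    have h1 : f + (s + 1) = (f + s) + 1 := by omega
    rw [h1, vl_succ S (f + s) (h s (by omega)), ih (by omega)]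

lemma Acc_mono (a : Fin n →₀ ℕ) {u v : ℕ} (huv : u ≤ v) : Acc a u ≤ Acc a v := by
  apply Finset.sum_le_sum_of_subset
  intro z hz
  rw [Finset.mem_filter] at hz ⊢
  exact ⟨hz.1, by omega⟩

lemma fe_mono (a : Fin n →₀ ℕ) {x y : Fin n} (hxy : x ≤ y) : fe a x ≤ fe a y := by
  have h1 := Acc_mono a (u := x.val) (v := y.val) hxy
  have h2 : (x : ℕ) ≤ y := hxy
  rw [fe, fe]; omega

lemma mem_sigmaSupport_iff (a : Fin n →₀ ℕ) (e : ℕ) :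
    e ∈ sigmaSupport a ↔ ∃ x ∈ a.support, e ∈ Blk a x := by
  rw [sigmaSupport_eq]; exact Finset.mem_biUnion

lemma blk_subset (a : Fin n →₀ ℕ) {x : Fin n} (hx : x ∈ a.support) :
    Blk a x ⊆ sigmaSupport a := by
  intro e he
  exact (mem_sigmaSupport_iff a e).2 ⟨x, hx, he⟩

lemma rk_fe (a : Fin n →₀ ℕ) (x : Fin n) :
    rk (sigmaSupport a) (fe a x) = Acc a x.val := by
  have hset : (sigmaSupport a).filter (· < fe a x)
      = (a.support.filter (fun y => y < x)).biUnion (Blk a) := by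
    ext e
    rw [Finset.mem_filter, Finset.mem_biUnion]
    constructor
    · rintro ⟨he, hlt⟩
      rcases (mem_sigmaSupport_iff a e).1 he with ⟨y, hy, hby⟩
      refine ⟨y, Finset.mem_filter.2 ⟨hy, ?_⟩, hby⟩
      by_contra hyx
      push_neg at hyx
      have h1 : fe a x ≤ fe a y := fe_mono a hyx
      rw [Blk, Finset.mem_Ico] at hby
      omega
    · rintro ⟨y, hy, hby⟩
      rw [Finset.mem_filter] at hy
      have h1 : fe a y + a y ≤ fe a x := blk_upper a y x hy.2
      rw [Blk, Finset.mem_Ico] at hby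
      exact ⟨(mem_sigmaSupport_iff a e).2 ⟨y, hy.1, by rw [Blk, Finset.mem_Ico]; omega⟩, by omega⟩
  rw [rk, hset, Finset.card_biUnion (fun u _ v _ huv => Blk_disjoint a huv)]
  have : ∀ y ∈ a.support.filter (fun y => y < x), (Blk a y).card = a y := by
    intro y _
    rw [Blk, Nat.card_Ico]; omega
  rw [Finset.sum_congr rfl this, Acc]
  apply Finset.sum_subset
  · intro z hz
    rw [Finset.mem_filter] at hz ⊢
    exact ⟨Finset.mem_univ z, hz.2⟩
  · intro z hz hz2
    rw [Finset.mem_filter] at hz hz2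
    by_contra h
    exact hz2 ⟨Finsupp.mem_support_iff.2 h, by
      have := hz.2
      exact Fin.lt_iff_val_lt_val.2 this⟩

lemma vl_fe (a : Fin n →₀ ℕ) (x : Fin n) :
    vl (sigmaSupport a) (fe a x) = x.val := by
  rw [vl, rk_fe, fe]; omega

lemma vl_blk_of_subset (a : Fin n →₀ ℕ) {S' : Finset ℕ} (hS : sigmaSupport a ⊆ S')
    {x : Fin n} (hx : x ∈ a.support) {e : ℕ} (he : e ∈ Blk a x) :
    vl S' e = vl S' (fe a x) := by
  rw [Blk, Finset.mem_Ico] at he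
  have h1 : ∀ t, t < a x → fe a x + t ∈ S' := by
    intro t ht
    exact hS (blk_subset a hx (by rw [Blk, Finset.mem_Ico]; omega))
  have h2 : e = fe a x + (e - fe a x) := by omega
  rw [h2]
  exact vl_const S' (fe a x) (a x) h1 _ (by omega)

lemma vl_le (a : Fin n →₀ ℕ) {S' : Finset ℕ} (hS : sigmaSupport a ⊆ S') (x : Fin n) :
    vl S' (fe a x) ≤ x.val := by
  have h1 : rk (sigmaSupport a) (fe a x) ≤ rk S' (fe a x) :=
    Finset.card_le_card (Finset.filter_subset_filter _ hS)
  rw [rk_fe] at h1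
  simp only [vl, fe] at h1 ⊢
  omega

lemma fiber_card (a : Fin n →₀ ℕ) (y : Fin n) :
    ((sigmaSupport a).filter (fun e => vl (sigmaSupport a) e = y.val)).card = a y := by
  have hval : ∀ x ∈ a.support,
      (Blk a x).filter (fun e => vl (sigmaSupport a) e = y.val)
        = if x = y then Blk a x else ∅ := by
    intro x hx
    have hv : ∀ e ∈ Blk a x, vl (sigmaSupport a) e = x.val := by
      intro e he
      rw [vl_blk_of_subset a (le_refl _) hx he, vl_fe]
    split_ifs with hxy
    · subst hxy
      exact Finset.filter_true_of_mem hv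
    · apply Finset.filter_false_of_mem
      intro e he
      rw [hv e he]
      intro h
      exact hxy (Fin.ext h)
  have hsplit : (sigmaSupport a).filter (fun e => vl (sigmaSupport a) e = y.val)
      = a.support.biUnion (fun x => (Blk a x).filter (fun e => vl (sigmaSupport a) e = y.val)) := by
    ext e
    simp only [Finset.mem_filter, Finset.mem_biUnion, mem_sigmaSupport_iff]
    tauto
  rw [hsplit, Finset.biUnion_congr rfl hval, Finset.card_biUnion]
  · have hterm : ∀ x ∈ a.support, (if x = y then Blk a x else ∅).card
        = if x = y then a y else 0 := by
      intro x _
      split_ifs with hxy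
      · subst hxy; rw [Blk, Nat.card_Ico]; omega
      · simp
    rw [Finset.sum_congr rfl hterm, Finset.sum_ite_eq' a.support y (fun _ => a y)]
    split_ifs with hy
    · rfl
    · exact (Finsupp.notMem_support_iff.1 hy).symm
  · intro u hu v hv huv
    have h1 : (if u = y then Blk a u else ∅) ⊆ Blk a u := by
      split_ifs
      · exact Finset.Subset.refl _
      · exact Finset.empty_subset _
    have h2 : (if v = y then Blk a v else ∅) ⊆ Blk a v := by
      split_ifs
      · exact Finset.Subset.refl _
      · exact Finset.empty_subset _
    exact (Blk_disjoint a huv).mono h1 h2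
lemma sigmaSupport_inj {a a' : Fin n →₀ ℕ} (h : sigmaSupport a = sigmaSupport a') :
    a = a' := by
  ext y
  rw [← fiber_card a y, ← fiber_card a' y, h]

lemma mapDomain_apply' (f : Fin n → Fin n) (a : Fin n →₀ ℕ) (y : Fin n) :
    (Finsupp.mapDomain f a) y = ∑ x ∈ a.support.filter (fun x => f x = y), a x := by
  rw [Finsupp.mapDomain, Finsupp.sum_apply, Finsupp.sum, Finset.sum_filter]
  refine Finset.sum_congr rfl fun x _ => ?_
  rw [Finsupp.single_apply]

lemma degExp_mapDomain (f : Fin n → Fin n) (a : Fin n →₀ ℕ) :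
    degExp (Finsupp.mapDomain f a) = degExp a := by
  rw [degExp, degExp, Finsupp.sum_mapDomain_index (fun _ => rfl) (fun _ _ _ => rfl)]

lemma exists_pushdown (a a' : Fin n →₀ ℕ) (hss : sigmaSupport a ⊆ sigmaSupport a') :
    ∃ f : Fin n → Fin n, (∀ x, f x ≤ x) ∧ Finsupp.mapDomain f a ≤ a' := by
  classical
  set f : Fin n → Fin n := fun x => ⟨min (vl (sigmaSupport a') (fe a x)) x.val,
    lt_of_le_of_lt (min_le_right _ _) x.isLt⟩ with hf
  have hfval : ∀ x ∈ a.support, (f x).val = vl (sigmaSupport a') (fe a x) := by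
    intro x hx
    simp only [hf]
    exact min_eq_left (vl_le a hss x)
  refine ⟨f, fun x => ?_, ?_⟩
  · rw [Fin.le_def]
    exact min_le_right _ _
  · rw [Finsupp.le_def]
    intro y
    have hset : (sigmaSupport a).filter (fun e => vl (sigmaSupport a') e = y.val)
        = (a.support.filter (fun x => f x = y)).biUnion (Blk a) := by
      ext e
      simp only [Finset.mem_filter, Finset.mem_biUnion, mem_sigmaSupport_iff]
      constructor
      · rintro ⟨⟨x, hx, hbx⟩, hvy⟩
        refine ⟨x, ⟨hx, ?_⟩, hbx⟩
        apply Fin.ext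
        rw [hfval x hx, ← vl_blk_of_subset a hss hx hbx]
        exact hvy
      · rintro ⟨x, hx, hbx⟩
        refine ⟨⟨x, hx.1, hbx⟩, ?_⟩
        rw [vl_blk_of_subset a hss hx.1 hbx, ← hfval x hx.1, hx.2]
    have hcard1 : ((sigmaSupport a).filter (fun e => vl (sigmaSupport a') e = y.val)).card
        = (Finsupp.mapDomain f a) y := by
      rw [hset, Finset.card_biUnion (fun u _ v _ huv => Blk_disjoint a huv),
        mapDomain_apply' f a y]
      refine Finset.sum_congr rfl fun x _ => ?_
      rw [Blk, Nat.card_Ico]; omega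
    have hcard2 : ((sigmaSupport a).filter (fun e => vl (sigmaSupport a') e = y.val)).card
        ≤ ((sigmaSupport a').filter (fun e => vl (sigmaSupport a') e = y.val)).card :=
      Finset.card_le_card (Finset.filter_subset_filter _ hss)
    rw [fiber_card a' y] at hcard2
    omega


end Comb

section Alg


variable {n : ℕ} {K : Type} [Field K] {I : Ideal (MvPolynomial (Fin n) K)}

lemma monomial_mem_of_support (hM : IsMonomialIdeal K I) {p : MvPolynomial (Fin n) K}
    (hp : p ∈ I) {m : Fin n →₀ ℕ} (hm : m ∈ p.support) : monomial m (1 : K) ∈ I := by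
  classical
  obtain ⟨A, rfl⟩ := hM
  rw [mem_ideal_span_monomial_image] at hp ⊢
  intro xi hxi
  rw [support_monomial, if_neg (one_ne_zero : (1:K) ≠ 0)] at hxi
  rw [Finset.mem_singleton] at hxi
  subst hxi
  exact hp _ hm

lemma block_move (hM : IsMonomialIdeal K I) (hb : IsBorelFixed K I)
    {a : Fin n →₀ ℕ} (ha : monomial a (1 : K) ∈ I) {k x : Fin n} (hkx : k < x) :
    monomial (a.erase x + Finsupp.single k (a x)) (1 : K) ∈ I := by
  classical
  have hkxne : k ≠ x := ne_of_lt hkx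
  set r := a x with hr
  set E : Matrix (Fin n) (Fin n) K := Matrix.single x k 1 with hE
  set g : Matrix (Fin n) (Fin n) K := 1 + E with hg
  have hEE : E * E = 0 := Matrix.single_mul_single_of_ne (c := (1:K)) (i := x) (j := k) (k := x) (h := hkxne) (d := 1)
  have hunit : IsUnit g := by
    refine isUnit_iff_exists.2 ⟨1 - E, ?_, ?_⟩
    · have h2 : ((1 : Matrix (Fin n) (Fin n) K) + E) * (1 - E) = 1 + E - E - E * E := by
        noncomm_ring
      rw [hg, h2, hEE, sub_zero]
      abel
    · have h2 : ((1 : Matrix (Fin n) (Fin n) K) - E) * (1 + E) = 1 + E - E - E * E := by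
        noncomm_ring
      rw [hg, h2, hEE, sub_zero]
      abel
  have hdet : IsUnit g.det := (Matrix.isUnit_iff_isUnit_det g).1 hunit
  have htri : ∀ i j : Fin n, i < j → g i j = 0 := by
    intro i j hij
    rw [hg, Matrix.add_apply, Matrix.one_apply, if_neg (ne_of_lt hij), hE,
      Matrix.single, Matrix.of_apply]
    rw [if_neg]
    · ring
    · rintro ⟨rfl, rfl⟩
      exact absurd hkx (not_lt_of_gt hij)
  have hmap := hb g hdet htri
  set φ := changeOfVars K g with hφ
  have hX : ∀ i : Fin n, φ (X i) = if i = x then X x + X k else X i := by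
    intro i
    rw [hφ, changeOfVars, aeval_X]
    have hterm : ∀ j : Fin n, C (g i j) * (X j : MvPolynomial (Fin n) K)
        = (if j = i then X j else 0) + (if i = x ∧ j = k then X j else 0) := by
      intro j
      rw [hg, Matrix.add_apply, Matrix.one_apply, hE, Matrix.single, Matrix.of_apply]
      by_cases h2 : x = i ∧ k = j
      · obtain ⟨rfl, rfl⟩ := h2
        rw [if_neg (fun h : x = k => hkxne h.symm), if_pos ⟨rfl, rfl⟩, zero_add, map_one,
          one_mul, if_neg (fun h : k = x => hkxne h), zero_add, if_pos ⟨rfl, rfl⟩]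
      · rw [if_neg h2, add_zero]
        by_cases h1 : i = j
        · subst h1
          rw [if_pos rfl, map_one, one_mul, if_pos rfl,
            if_neg (by rintro ⟨rfl, rfl⟩; exact hkxne rfl), add_zero]
        · rw [if_neg h1, map_zero, zero_mul, if_neg (fun h => h1 h.symm),
            if_neg (by rintro ⟨rfl, rfl⟩; exact h2 ⟨rfl, rfl⟩), add_zero]
    rw [Finset.sum_congr rfl fun j _ => hterm j, Finset.sum_add_distrib,
      Finset.sum_ite_eq' Finset.univ i (fun j => (X j : MvPolynomial (Fin n) K)),
      if_pos (Finset.mem_univ i)]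
    by_cases hix : i = x
    · subst hix
      rw [if_pos rfl]
      congr 1
      have : ∀ j : Fin n, (if i = i ∧ j = k then (X j : MvPolynomial (Fin n) K) else 0)
          = if j = k then X j else 0 := by
        intro j; simp
      rw [Finset.sum_congr rfl fun j _ => this j,
        Finset.sum_ite_eq' Finset.univ k (fun j => (X j : MvPolynomial (Fin n) K)),
        if_pos (Finset.mem_univ k)]
    · rw [if_neg hix]
      have : ∀ j : Fin n, (if i = x ∧ j = k then (X j : MvPolynomial (Fin n) K) else 0) = 0 := by
        intro j
        rw [if_neg]
        rintro ⟨h, _⟩; exact hix h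
      rw [Finset.sum_congr rfl fun j _ => this j, Finset.sum_const_zero, add_zero]
  have hmono : ∀ b : Fin n →₀ ℕ, x ∉ b.support → φ (monomial b (1:K)) = monomial b (1:K) := by
    intro b hxb
    have h1 : b.prod (fun i e => φ ((X i) ^ e)) = b.prod fun i e => (X i)^e := by
      apply Finsupp.prod_congr
      intro i hi
      rw [map_pow, hX i, if_neg (fun h => hxb (by rw [← h]; exact hi))]
    calc φ (monomial b 1) = b.prod (fun i e => φ ((X i)^e)) := by
          rw [monomial_eq, map_one, one_mul, map_finsuppProd]
      _ = b.prod fun i e => (X i)^e := h1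
      _ = monomial b (1:K) := by rw [monomial_eq, map_one, one_mul]
  have hsplit : monomial a (1:K) = monomial (a.erase x) (1:K) * (X x)^r := by
    rw [X_pow_eq_monomial]
    rw [monomial_mul, one_mul, hr, Finsupp.erase_add_single]
  have hφu : φ (monomial a (1:K)) = monomial (a.erase x) (1:K) * (X x + X k)^r := by
    rw [hsplit, map_mul, map_pow, hX x, if_pos rfl,
      hmono (a.erase x) (by simp [Finsupp.support_erase])]
  have hmem : φ (monomial a (1:K)) ∈ I := by
    rw [← hmap]
    exact Ideal.mem_map_of_mem _ ha
  set b1 : Fin n →₀ ℕ := a.erase x + Finsupp.single k r with hb1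
  have hcoeff : coeff b1 (φ (monomial a (1:K))) = 1 := by
    rw [hφu, (Commute.all (X x : MvPolynomial (Fin n) K) (X k)).add_pow r, Finset.mul_sum]
    rw [coeff_sum]
    have hterm : ∀ m ∈ Finset.range (r+1),
        coeff b1 (monomial (a.erase x) (1:K) * (X x ^ m * X k ^ (r - m) * ((r.choose m : ℕ) : MvPolynomial (Fin n) K)))
          = if m = 0 then 1 else 0 := by
      intro m hm
      have hcast : ((r.choose m : ℕ) : MvPolynomial (Fin n) K) = C ((r.choose m : ℕ) : K) := by
        rw [map_natCast (C : K →+* MvPolynomial (Fin n) K)]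
      have hprod : monomial (a.erase x) (1:K) *
            (X x ^ m * X k ^ (r - m) * ((r.choose m : ℕ) : MvPolynomial (Fin n) K))
          = C ((r.choose m : ℕ) : K) *
            monomial (a.erase x + ((fun₀ | x => m) + fun₀ | k => (r - m))) (1:K) := by
        rw [hcast, X_pow_eq_monomial, X_pow_eq_monomial]
        have hre : ∀ p q s c : MvPolynomial (Fin n) K, p * (q * s * c) = c * (p * (q * s)) :=
          fun _ _ _ _ => by ring
        rw [hre, monomial_mul, monomial_mul, one_mul, one_mul]
      rw [hprod, coeff_C_mul, coeff_monomial]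
      split_ifs with h1 h2 h2
      · subst h2; rw [Nat.choose_zero_right]; norm_num
      · exfalso
        rw [hb1] at h1
        have h3 := DFunLike.congr_fun h1 x
        rw [Finsupp.add_apply, Finsupp.add_apply, Finsupp.add_apply, Finsupp.single_eq_same,
          Finsupp.single_eq_of_ne' hkxne, Finsupp.single_eq_of_ne' hkxne] at h3
        omega
      · exfalso
        apply h1
        subst h2
        rw [hb1]
        simp
      · rw [mul_zero]
    rw [Finset.sum_congr rfl hterm, Finset.sum_ite_eq' (Finset.range (r+1)) 0 (fun _ => (1:K)),
      if_pos (Finset.mem_range.2 (by omega))]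
  have hsupp : b1 ∈ (φ (monomial a (1:K))).support := by
    rw [mem_support_iff, hcoeff]
    exact one_ne_zero
  exact monomial_mem_of_support hM hmem hsupp
lemma chain_move (hM : IsMonomialIdeal K I) (hb : IsBorelFixed K I) :
    ∀ (N : ℕ) (f : Fin n → Fin n) (a : Fin n →₀ ℕ),
      (a.support.filter (fun x => f x ≠ x)).card ≤ N → (∀ x, f x ≤ x) →
      monomial a (1 : K) ∈ I → monomial (Finsupp.mapDomain f a) (1 : K) ∈ I := by
  classical
  intro N
  induction N with
  | zero =>
    intro f a hcard _ ha
    have hfix : ∀ x ∈ a.support, f x = x := by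
      intro x hx
      by_contra hfx
      have : x ∈ a.support.filter (fun x => f x ≠ x) := Finset.mem_filter.2 ⟨hx, hfx⟩
      have := Finset.card_pos.2 ⟨x, this⟩
      omega
    rw [Finsupp.mapDomain_congr (g := id) hfix, Finsupp.mapDomain_id]
    exact ha
  | succ N ih =>
    intro f a hcard hfle ha
    by_cases hT : (a.support.filter (fun x => f x ≠ x)).Nonempty
    · set T := a.support.filter (fun x => f x ≠ x) with hTdef
      set x0 := T.min' hT with hx0def
      have hx0T : x0 ∈ T := T.min'_mem hT
      have hx0supp : x0 ∈ a.support := (Finset.mem_filter.1 hx0T).1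
      have hx0ne : f x0 ≠ x0 := (Finset.mem_filter.1 hx0T).2
      set k0 := f x0 with hk0def
      have hk0lt : k0 < x0 := lt_of_le_of_ne (hfle x0) hx0ne
      have hk0fix : k0 ∈ a.support → f k0 = k0 := by
        intro hk0supp
        by_contra hfk0
        have hk0T : k0 ∈ T := Finset.mem_filter.2 ⟨hk0supp, hfk0⟩
        have := T.min'_le k0 hk0T
        rw [← hx0def] at this
        exact absurd hk0lt (not_lt_of_ge this)
      set a1 := a.erase x0 + Finsupp.single k0 (a x0) with ha1def
      have ha1 : monomial a1 (1:K) ∈ I := block_move hM hb ha hk0lt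
      set f1 := Function.update f k0 k0 with hf1def
      have hf1le : ∀ x, f1 x ≤ x := by
        intro x
        by_cases hx : x = k0
        · subst hx; rw [hf1def, Function.update_self]
        · rw [hf1def, Function.update_of_ne hx]; exact hfle x
      have hsub : a1.support.filter (fun x => f1 x ≠ x) ⊆ T.erase x0 := by
        intro y hy
        obtain ⟨hy1, hy2⟩ := Finset.mem_filter.1 hy
        have hyk0 : y ≠ k0 := by
          intro h; subst h
          rw [hf1def, Function.update_self] at hy2
          exact hy2 rfl
        have hyx0 : y ≠ x0 := by
          intro h
          rw [h] at hy1
          have hz : a1 x0 = 0 := by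
            rw [ha1def, Finsupp.add_apply, Finsupp.erase_same,
              Finsupp.single_eq_of_ne' (ne_of_lt hk0lt), add_zero]
          exact (Finsupp.mem_support_iff.1 hy1) hz
        have hya : y ∈ a.support := by
          have : a1 y = a y := by
            rw [ha1def, Finsupp.add_apply, Finsupp.erase_ne hyx0,
              Finsupp.single_eq_of_ne' (Ne.symm hyk0), add_zero]
          rw [Finsupp.mem_support_iff] at hy1 ⊢
          rwa [this] at hy1
        have hfy : f y = f1 y := by
          rw [hf1def, Function.update_of_ne hyk0]
        refine Finset.mem_erase.2 ⟨hyx0, Finset.mem_filter.2 ⟨hya, ?_⟩⟩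
        rw [hfy]; exact hy2
      have hcard1 : (a1.support.filter (fun x => f1 x ≠ x)).card ≤ N := by
        have h1 := Finset.card_le_card hsub
        have h2 : (T.erase x0).card = T.card - 1 := Finset.card_erase_of_mem hx0T
        have h3 := Finset.card_pos.2 hT
        omega
      have hres := ih f1 a1 hcard1 hf1le ha1
      have heq : Finsupp.mapDomain f1 a1 = Finsupp.mapDomain f a := by
        have he1 : Finsupp.mapDomain f1 (a.erase x0) = Finsupp.mapDomain f (a.erase x0) := by
          apply Finsupp.mapDomain_congr
          intro y hy
          rw [Finsupp.support_erase] at hy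
          by_cases hyk0 : y = k0
          · subst hyk0
            rw [hf1def, Function.update_self, hk0fix (Finset.mem_of_mem_erase hy)]
          · rw [hf1def, Function.update_of_ne hyk0]
        calc Finsupp.mapDomain f1 a1
            = Finsupp.mapDomain f1 (a.erase x0) + Finsupp.single (f1 k0) (a x0) := by
              rw [ha1def, Finsupp.mapDomain_add, Finsupp.mapDomain_single]
          _ = Finsupp.mapDomain f (a.erase x0) + Finsupp.single k0 (a x0) := by
              rw [he1, hf1def, Function.update_self]
          _ = Finsupp.mapDomain f (a.erase x0) + Finsupp.single (f x0) (a x0) := by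
              rw [← hk0def]
          _ = Finsupp.mapDomain f a := by
              rw [← Finsupp.mapDomain_single (f := f) (a := x0) (b := a x0),
                ← Finsupp.mapDomain_add, Finsupp.erase_add_single]
      rwa [heq] at hres
    · rw [Finset.not_nonempty_iff_eq_empty] at hT
      have hfix : ∀ x ∈ a.support, f x = x := by
        intro x hx
        by_contra hfx
        have : x ∈ a.support.filter (fun x => f x ≠ x) := Finset.mem_filter.2 ⟨hx, hfx⟩
        rw [hT] at this
        exact absurd this (Finset.notMem_empty x)
      rw [Finsupp.mapDomain_congr (g := id) hfix, Finsupp.mapDomain_id]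
      exact ha


end Alg

end SP

namespace SP

variable {n : ℕ} {K : Type} [Field K] {I : Ideal (MvPolynomial (Fin n) K)}

lemma main_inj (hM : IsMonomialIdeal K I) (hb : IsBorelFixed K I) {a a' : Fin n →₀ ℕ}
    (ha : monomial a (1 : K) ∈ I)
    (hmin' : ∀ b ≤ a', b ≠ a' → monomial b (1 : K) ∉ I)
    (hss : sigmaSupport a ⊆ sigmaSupport a') : a = a' := by
  obtain ⟨f, hfle, hble⟩ := exists_pushdown a a' hss
  have hbI : monomial (Finsupp.mapDomain f a) (1 : K) ∈ I :=
    chain_move hM hb _ f a le_rfl hfle ha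
  by_cases hcase : Finsupp.mapDomain f a = a'
  · have hdeg : degExp a = degExp a' := by
      rw [← hcase, degExp_mapDomain]
    have hcards : (sigmaSupport a').card ≤ (sigmaSupport a).card := by
      rw [card_sigmaSupport, card_sigmaSupport, hdeg]
    exact sigmaSupport_inj (Finset.eq_of_subset_of_card_le hss hcards)
  · exact absurd hbI (hmin' _ hble hcase)

noncomputable def indic (S : Finset ℕ) : ℕ →₀ ℕ := ∑ t ∈ S, Finsupp.single t 1

lemma indic_apply (S : Finset ℕ) (m : ℕ) : indic S m = if m ∈ S then 1 else 0 := by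
  classical
  rw [indic, Finsupp.finset_sum_apply]
  rw [Finset.sum_congr rfl (fun t _ => Finsupp.single_apply)]
  exact Finset.sum_ite_eq' S m (fun _ => 1)

lemma prod_X_indic (K : Type) [Field K] (S : Finset ℕ) :
    (∏ t ∈ S, (X t : MvPolynomial ℕ K)) = monomial (indic S) 1 := by
  classical
  induction S using Finset.induction with
  | empty => simp [indic]
  | insert t S h ih =>
    have hX : (X t : MvPolynomial ℕ K) = monomial (Finsupp.single t 1) 1 := by
      rw [← X_pow_eq_monomial, pow_one]
    rw [Finset.prod_insert h, ih, hX, monomial_mul, one_mul, indic, indic, Finset.sum_insert h]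

lemma sigmaMonomialNat_eq (K : Type) [Field K] {n : ℕ} (a : Fin n →₀ ℕ) :
    sigmaMonomialNat K a = monomial (indic (sigmaSupport a)) 1 :=
  prod_X_indic K (sigmaSupport a)

lemma mem_minGens_iff {ι : Type} {I : Ideal (MvPolynomial ι K)} {a : ι →₀ ℕ} :
    monomial a (1 : K) ∈ minGens K I ↔
      monomial a (1 : K) ∈ I ∧ ∀ b ≤ a, b ≠ a → monomial b (1 : K) ∉ I := by
  constructor
  · rintro ⟨a0, he, hI, hmin⟩
    have h : a = a0 := monomial_left_injective (one_ne_zero (α := K)) he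
    subst h
    exact ⟨hI, hmin⟩
  · rintro ⟨hI, hmin⟩
    exact ⟨a, rfl, hI, hmin⟩

end SP

/-- If `I` is a stable, Borel-fixed monomial ideal of `K[x_1,…,x_n]`
with minimal monomial generating set `G(I)`, then the minimal monomial generating set of
`I^σ` is exactly `{u^σ : u ∈ G(I)}`. -/
theorem minGens_sigmaIdeal (n : ℕ) (K : Type) [Field K] [Infinite K]
    (I : Ideal (MvPolynomial (Fin n) K)) (hst : IsStableIdeal K I)
    (hb : IsBorelFixed K I) :
    minGens K (sigmaIdealNat K I) =
      { u | ∃ a : Fin n →₀ ℕ, monomial a (1 : K) ∈ minGens K I ∧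
        u = sigmaMonomialNat K a } := by
  classical
  obtain ⟨hM, _⟩ := hst
  have hgen : {u | ∃ a : Fin n →₀ ℕ, monomial a (1:K) ∈ minGens K I ∧ u = sigmaMonomialNat K a}
      = (fun s => monomial s (1:K)) ''
        {s : ℕ →₀ ℕ | ∃ a : Fin n →₀ ℕ, monomial a (1:K) ∈ minGens K I
          ∧ s = SP.indic (sigmaSupport a)} := by
    ext u
    constructor
    · rintro ⟨a, haG, rfl⟩
      exact ⟨SP.indic (sigmaSupport a), ⟨a, haG, rfl⟩, (SP.sigmaMonomialNat_eq K a).symm⟩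
    · rintro ⟨s, ⟨a, haG, rfl⟩, rfl⟩
      exact ⟨a, haG, (SP.sigmaMonomialNat_eq K a).symm⟩
  have hJ : sigmaIdealNat K I = Ideal.span ((fun s => monomial s (1:K)) ''
      {s : ℕ →₀ ℕ | ∃ a : Fin n →₀ ℕ, monomial a (1:K) ∈ minGens K I
        ∧ s = SP.indic (sigmaSupport a)}) := by
    rw [sigmaIdealNat, hgen]
  have hmemJ : ∀ b : ℕ →₀ ℕ, monomial b (1:K) ∈ sigmaIdealNat K I ↔
      ∃ a : Fin n →₀ ℕ, monomial a (1:K) ∈ minGens K I ∧ SP.indic (sigmaSupport a) ≤ b := by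
    intro b
    rw [hJ, mem_ideal_span_monomial_image]
    constructor
    · intro h
      obtain ⟨si, hsi, hle⟩ := h b (by
        rw [support_monomial, if_neg (one_ne_zero : (1:K) ≠ 0)]
        exact Finset.mem_singleton_self b)
      obtain ⟨a, haG, rfl⟩ := hsi
      exact ⟨a, haG, hle⟩
    · rintro ⟨a, haG, hle⟩ xi hxi
      rw [support_monomial, if_neg (one_ne_zero : (1:K) ≠ 0), Finset.mem_singleton] at hxi
      subst hxi
      exact ⟨_, ⟨a, haG, rfl⟩, hle⟩
  have hanti : ∀ a a' : Fin n →₀ ℕ, monomial a (1:K) ∈ minGens K I →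
      monomial a' (1:K) ∈ minGens K I → sigmaSupport a ⊆ sigmaSupport a' → a = a' := by
    intro a a' hga hga' hss
    obtain ⟨haI, -⟩ := SP.mem_minGens_iff.1 hga
    obtain ⟨-, hmin'⟩ := SP.mem_minGens_iff.1 hga'
    exact SP.main_inj hM hb haI hmin' hss
  ext u
  constructor
  · rintro ⟨b, rfl, hbJ, hbmin⟩
    obtain ⟨a, haG, hle⟩ := (hmemJ b).1 hbJ
    have hb_eq : SP.indic (sigmaSupport a) = b := by
      by_contra hne
      exact hbmin _ hle hne ((hmemJ _).2 ⟨a, haG, le_refl _⟩)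
    exact ⟨a, haG, by rw [SP.sigmaMonomialNat_eq K a, hb_eq]⟩
  · rintro ⟨a, haG, rfl⟩
    rw [SP.sigmaMonomialNat_eq K a]
    refine ⟨SP.indic (sigmaSupport a), rfl,
      (hmemJ _).2 ⟨a, haG, le_refl _⟩, ?_⟩
    intro b hble hbne hbJ
    obtain ⟨a', haG', hle'⟩ := (hmemJ b).1 hbJ
    have hss : sigmaSupport a' ⊆ sigmaSupport a := by
      intro t ht
      have h2 := (Finsupp.le_def.1 hle') t
      rw [SP.indic_apply, if_pos ht] at h2
      have h3 := (Finsupp.le_def.1 hble) t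
      rw [SP.indic_apply] at h3
      by_contra hts
      rw [if_neg hts] at h3
      omega
    have heq : a' = a := hanti a' a haG' haG hss
    subst heq
    exact hbne (le_antisymm hble hle')
end

section
/- Let Δ be a simplicial complex on [n] and let 1 ≤ k < l ≤ n. The map S_{kl} is injective on ∇: if σ, τ ∈ ∇ and σ ≠ τ, then S_{kl}(σ) ≠ S_{kl}(τ). -/
open MvPolynomial

/-- The map `S_{kl}` is injective on the set `∇` of nonfaces of `Δ`. -/
theorem Skl_injective (n : ℕ) (Δ : Set (Finset (Fin n))) (hΔ : IsSimplicialComplex Δ)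
    (k l : Fin n) (hkl : k < l) (σ τ : Finset (Fin n)) (hσ : σ ∉ Δ) (hτ : τ ∉ Δ)
    (hne : σ ≠ τ) :
    Skl Δ k l σ ≠ Skl Δ k l τ := by
  intro h
  unfold Skl at h
  split_ifs at h with h1 h2 h2
  · obtain ⟨hl1, hk1, hd1⟩ := h1
    obtain ⟨hl2, hk2, hd2⟩ := h2
    apply hne
    have he : σ.erase l = τ.erase l := by
      have h' := congrArg (Finset.erase · k) h
      simpa [Finset.erase_insert (fun hm => hk1 (Finset.mem_of_mem_erase hm)),
        Finset.erase_insert (fun hm => hk2 (Finset.mem_of_mem_erase hm))] using h'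
    rw [← Finset.insert_erase hl1, he, Finset.insert_erase hl2]
  · exact hτ (h ▸ h1.2.2)
  · exact hσ (h ▸ h2.2.2)
  · exact hne h
end

section
/- Let Δ be a simplicial complex on [n], let 1 ≤ k < l ≤ n, and let σ_1,…,σ_r be the minimal nonfaces of Δ (so the minimal monomial generators of I_Δ are x_{σ_1},…,x_{σ_r}). Then σ_i ≠ S_{kl}(σ_j) for any i ≠ j, and if S_{kl}(σ_i) ⊆ S_{kl}(σ_j) for some i ≠ j, then S_{kl}(σ_i) ≠ σ_i and S_{kl}(σ_j) = σ_j. -/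
open MvPolynomial

/-- For minimal nonfaces `σ_i ≠ σ_j` of `Δ`: `σ_i ≠ S_{kl}(σ_j)`, and
if `S_{kl}(σ_i) ⊆ S_{kl}(σ_j)` then `S_{kl}(σ_i) ≠ σ_i` and `S_{kl}(σ_j) = σ_j`. -/
theorem Skl_minNonface_props (n : ℕ) (Δ : Set (Finset (Fin n)))
    (hΔ : IsSimplicialComplex Δ) (k l : Fin n) (hkl : k < l)
    (σi σj : Finset (Fin n)) (hi : IsMinNonface Δ σi) (hj : IsMinNonface Δ σj)
    (hne : σi ≠ σj) :
    σi ≠ Skl Δ k l σj ∧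
      (Skl Δ k l σi ⊆ Skl Δ k l σj → Skl Δ k l σi ≠ σi ∧ Skl Δ k l σj = σj) := by
  classical
  constructor
  · intro heq
    by_cases h : l ∈ σj ∧ k ∉ σj ∧ insert k (σj.erase l) ∈ Δ
    · rw [Skl, if_pos h] at heq
      exact hi.1 (heq ▸ h.2.2)
    · rw [Skl, if_neg h] at heq
      exact hne heq
  · intro hsub
    have hjj : Skl Δ k l σj = σj := by
      by_cases h : l ∈ σj ∧ k ∉ σj ∧ insert k (σj.erase l) ∈ Δ
      · exfalso
        rw [Skl, Skl, if_pos h] at hsub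
        by_cases h' : l ∈ σi ∧ k ∉ σi ∧ insert k (σi.erase l) ∈ Δ
        · rw [if_pos h'] at hsub
          have hss : σi ⊆ σj := by
            intro x hx
            by_cases hxl : x = l
            · exact hxl ▸ h.1
            · have hx' : x ∈ σi.erase l := Finset.mem_erase.mpr ⟨hxl, hx⟩
              have hx'' : x ∈ insert k (σj.erase l) := hsub (Finset.mem_insert_of_mem hx')
              rcases Finset.mem_insert.mp hx'' with hxk | hxe
              · exact absurd hx (hxk ▸ h'.2.1)
              · exact Finset.mem_of_mem_erase hxe
          exact hi.1 (hj.2 σi (lt_of_le_of_ne hss hne))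
        · rw [if_neg h'] at hsub
          exact hi.1 (hΔ.2 _ h.2.2 σi hsub)
      · rw [Skl, if_neg h]
    refine ⟨?_, hjj⟩
    rw [hjj] at hsub
    intro hii
    rw [hii] at hsub
    exact hi.1 (hj.2 σi (lt_of_le_of_ne hsub hne))
end

section
/- Let Δ be a stable simplicial complex on [n] and let 1 ≤ k < l ≤ n. Then Shift_{kl}(Δ) is also stable. -/
open MvPolynomial

private lemma skl_eq_self' {n : ℕ} {Δ : Set (Finset (Fin n))} {k l : Fin n}
    {σ : Finset (Fin n)} (h : ¬(l ∈ σ ∧ k ∉ σ ∧ insert k (σ.erase l) ∈ Δ)) :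
    Skl Δ k l σ = σ := by
  unfold Skl; exact if_neg h

private lemma skl_eq_swap' {n : ℕ} {Δ : Set (Finset (Fin n))} {k l : Fin n}
    {σ : Finset (Fin n)} (h : l ∈ σ ∧ k ∉ σ ∧ insert k (σ.erase l) ∈ Δ) :
    Skl Δ k l σ = insert k (σ.erase l) := by
  unfold Skl; exact if_pos h

private lemma skl_card' {n : ℕ} (Δ : Set (Finset (Fin n))) (k l : Fin n)
    (σ : Finset (Fin n)) : (Skl Δ k l σ).card = σ.card := by
  unfold Skl
  split_ifs with h
  · obtain ⟨hl, hk, -⟩ := h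
    have h1 : k ∉ σ.erase l := fun hm => hk (Finset.mem_of_mem_erase hm)
    have h2 := Finset.card_pos.mpr ⟨l, hl⟩
    rw [Finset.card_insert_of_notMem h1, Finset.card_erase_of_mem hl]
    omega
  · rfl

/-- If `Δ` is a stable simplicial complex on `[n]` and `k < l`, then
`Shift_{kl}(Δ)` is also stable. -/
theorem shiftKl_isStable (n : ℕ) (Δ : Set (Finset (Fin n))) (hst : IsStableComplex Δ)
    (k l : Fin n) (hkl : k < l) :
    IsStableComplex (ShiftKl Δ k l) := by
  obtain ⟨⟨hsing, hdown⟩, hstab⟩ := hst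
  have htwo : ∀ σ : Finset (Fin n), σ ∉ Δ → 2 ≤ σ.card := by
    intro σ hσ
    have : Nonempty (Fin n) := ⟨k⟩
    by_contra h
    push_neg at h
    have h1 : σ.card ≤ 1 := by omega
    rcases Finset.card_le_one_iff_subset_singleton.mp h1 with ⟨a, ha⟩
    exact hσ (hdown {a} (hsing a) σ ha)
  constructor
  · constructor
    · intro j hj
      obtain ⟨σ, hσ, hsub⟩ := hj
      have h1 : (Skl Δ k l σ).card ≤ 1 := by
        have := Finset.card_le_card hsub
        simpa using this
      rw [skl_card'] at h1
      have := htwo σ hσ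
      omega
    · intro τ hτ ρ hρτ hbad
      obtain ⟨σ, hσ, hsub⟩ := hbad
      exact hτ ⟨σ, hσ, hsub.trans hρτ⟩
  · intro τ hτ m i hm hmax him hiτ
    simp only [ShiftKl, Set.mem_setOf_eq, not_not] at hτ ⊢
    obtain ⟨σ0, hσ0, hsub0⟩ := hτ
    by_cases hmρ : m ∈ Skl Δ k l σ0
    · -- reduce to finding σ'' with Skl σ'' ⊆ insert i ((Skl σ0).erase m)
      have hsubτ : insert i ((Skl Δ k l σ0).erase m) ⊆ insert i (τ.erase m) :=
        Finset.insert_subset_insert _ (Finset.erase_subset_erase _ hsub0)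
      have hiρ : i ∉ Skl Δ k l σ0 := fun h => hiτ (hsub0 h)
      have hmaxρ : ∀ x ∈ Skl Δ k l σ0, x ≤ m := fun x hx => hmax x (hsub0 hx)
      suffices h : ∃ σ'', σ'' ∉ Δ ∧ Skl Δ k l σ'' ⊆ insert i ((Skl Δ k l σ0).erase m) by
        obtain ⟨σ'', h1, h2⟩ := h
        exact ⟨σ'', h1, h2.trans hsubτ⟩
      by_cases hc : l ∈ σ0 ∧ k ∉ σ0 ∧ insert k (σ0.erase l) ∈ Δ
      · -- Case B: swap happened
        obtain ⟨hlσ, hkσ, hρΔ⟩ := hc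
        rw [skl_eq_swap' ⟨hlσ, hkσ, hρΔ⟩] at hmρ hiρ hmaxρ ⊢
        -- derive facts
        have hmk : m ≠ k := by
          rintro rfl
          have hmaxσ : ∀ x ∈ σ0, x ≤ l := by
            intro x hx
            rcases eq_or_ne x l with rfl | hxl
            · exact le_refl _
            · exact le_of_lt (lt_of_le_of_lt
                (hmaxρ x (Finset.mem_insert_of_mem (Finset.mem_erase.mpr ⟨hxl, hx⟩))) hkl)
          exact hstab σ0 hσ0 l m hlσ hmaxσ hkl hkσ hρΔ
        have hmσ : m ∈ σ0 ∧ m ≠ l := by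
          rcases Finset.mem_insert.mp hmρ with h | h
          · exact absurd h hmk
          · exact ⟨(Finset.mem_erase.mp h).2, (Finset.mem_erase.mp h).1⟩
        have hlm : l < m := by
          by_contra hlm
          push_neg at hlm
          have hmaxσ : ∀ x ∈ σ0, x ≤ l := by
            intro x hx
            rcases eq_or_ne x l with rfl | hxl
            · exact le_refl _
            · exact le_trans (hmaxρ x (Finset.mem_insert_of_mem
                (Finset.mem_erase.mpr ⟨hxl, hx⟩))) hlm
          exact hstab σ0 hσ0 l k hlσ hmaxσ hkl hkσ hρΔ
        have hmaxσ : ∀ x ∈ σ0, x ≤ m := by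
          intro x hx
          rcases eq_or_ne x l with rfl | hxl
          · exact le_of_lt hlm
          · exact hmaxρ x (Finset.mem_insert_of_mem (Finset.mem_erase.mpr ⟨hxl, hx⟩))
        have hkm : k < m := hkl.trans hlm
        have hik : i ≠ k := by rintro rfl; exact hiρ (Finset.mem_insert_self i _)
        rcases eq_or_ne i l with rfl | hil
        · -- subcase i = l
          refine ⟨insert k (σ0.erase m), hstab σ0 hσ0 m k hmσ.1 hmaxσ hkm hkσ, ?_⟩
          rw [skl_eq_self' (by rintro ⟨-, hk', -⟩; exact hk' (Finset.mem_insert_self k _))]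
          intro x hx
          simp only [Finset.mem_insert, Finset.mem_erase] at hx ⊢
          rcases hx with rfl | ⟨hxm, hxσ⟩
          · exact Or.inr ⟨hkm.ne, Or.inl rfl⟩
          · rcases eq_or_ne x i with rfl | hxi
            · exact Or.inl rfl
            · exact Or.inr ⟨hxm, Or.inr ⟨hxi, hxσ⟩⟩
        · -- subcase i ≠ l
          have hiσ : i ∉ σ0 := fun h => hiρ
            (Finset.mem_insert_of_mem (Finset.mem_erase.mpr ⟨hil, h⟩))
          have hσ1 : insert i (σ0.erase m) ∉ Δ := hstab σ0 hσ0 m i hmσ.1 hmaxσ him hiσ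
          have hTeq : insert k ((insert i (σ0.erase m)).erase l)
              = insert i ((insert k (σ0.erase l)).erase m) := by
            ext x
            simp only [Finset.mem_insert, Finset.mem_erase]
            constructor
            · rintro (rfl | ⟨hxl, (rfl | ⟨hxm, hxσ⟩)⟩)
              · exact Or.inr ⟨hkm.ne, Or.inl rfl⟩
              · exact Or.inl rfl
              · exact Or.inr ⟨hxm, Or.inr ⟨hxl, hxσ⟩⟩
            · rintro (rfl | ⟨hxm, (rfl | ⟨hxl, hxσ⟩)⟩)
              · exact Or.inr ⟨hil, Or.inl rfl⟩
              · exact Or.inl rfl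
              · exact Or.inr ⟨hxl, Or.inr ⟨hxm, hxσ⟩⟩
          by_cases hT : insert k ((insert i (σ0.erase m)).erase l) ∈ Δ
          · refine ⟨insert i (σ0.erase m), hσ1, ?_⟩
            have hl1 : l ∈ insert i (σ0.erase m) :=
              Finset.mem_insert_of_mem (Finset.mem_erase.mpr ⟨hlm.ne, hlσ⟩)
            have hk1 : k ∉ insert i (σ0.erase m) := by
              simp only [Finset.mem_insert, Finset.mem_erase]
              rintro (rfl | ⟨-, hkσ'⟩)
              · exact hik rfl
              · exact hkσ hkσ'
            rw [skl_eq_swap' ⟨hl1, hk1, hT⟩, hTeq]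
          · refine ⟨_, hT, ?_⟩
            rw [skl_eq_self' (by
              rintro ⟨-, hk', -⟩; exact hk' (Finset.mem_insert_self k _)), hTeq]
      · -- Case A: no swap on σ0
        rw [skl_eq_self' hc] at hmρ hiρ hmaxρ ⊢
        have hσ' : insert i (σ0.erase m) ∉ Δ := hstab σ0 hσ0 m i hmρ hmaxρ him hiρ
        refine ⟨insert i (σ0.erase m), hσ', ?_⟩
        rw [skl_eq_self' ?_]
        · rintro ⟨hl', hk', hγ⟩
          have hklm : k < m := by
            rcases Finset.mem_insert.mp hl' with rfl | h
            · exact hkl.trans him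
            · exact lt_of_lt_of_le hkl (hmaxρ l (Finset.mem_of_mem_erase h))
          have hkσ0 : k ∉ σ0 := by
            intro h
            exact hk' (Finset.mem_insert_of_mem (Finset.mem_erase.mpr ⟨hklm.ne, h⟩))
          have hki : k ≠ i := by rintro rfl; exact hk' (Finset.mem_insert_self k _)
          rcases Finset.mem_insert.mp hl' with h_li | hlσ
          · -- l = i
            have heq : insert k ((insert i (σ0.erase m)).erase l) = insert k (σ0.erase m) := by
              subst h_li
              rw [Finset.erase_insert (fun h => hiρ (Finset.mem_of_mem_erase h))]
            rw [heq] at hγ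
            exact hstab σ0 hσ0 m k hmρ hmaxρ hklm hkσ0 hγ
          · -- l ∈ σ0.erase m
            obtain ⟨hlm, hlσ0⟩ := Finset.mem_erase.mp hlσ
            have hli : i ≠ l := by rintro rfl; exact hiρ hlσ0
            have hβ : insert k (σ0.erase l) ∉ Δ := fun h => hc ⟨hlσ0, hkσ0, h⟩
            have hmβ : m ∈ insert k (σ0.erase l) :=
              Finset.mem_insert_of_mem (Finset.mem_erase.mpr ⟨fun h => hlm h.symm, hmρ⟩)
            have hmaxβ : ∀ x ∈ insert k (σ0.erase l), x ≤ m := by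
              intro x hx
              rcases Finset.mem_insert.mp hx with rfl | h
              · exact le_of_lt hklm
              · exact hmaxρ x (Finset.mem_of_mem_erase h)
            have hiβ : i ∉ insert k (σ0.erase l) := by
              simp only [Finset.mem_insert, Finset.mem_erase]
              rintro (rfl | ⟨-, h⟩)
              · exact hki rfl
              · exact hiρ h
            have := hstab _ hβ m i hmβ hmaxβ him hiβ
            have heq : insert i ((insert k (σ0.erase l)).erase m)
                = insert k ((insert i (σ0.erase m)).erase l) := by
              ext x
              simp only [Finset.mem_insert, Finset.mem_erase]
              constructor
              · rintro (rfl | ⟨hxm, (rfl | ⟨hxl, hxσ⟩)⟩)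
                · exact Or.inr ⟨hli, Or.inl rfl⟩
                · exact Or.inl rfl
                · exact Or.inr ⟨hxl, Or.inr ⟨hxm, hxσ⟩⟩
              · rintro (rfl | ⟨hxl, (rfl | ⟨hxm, hxσ⟩)⟩)
                · exact Or.inr ⟨hklm.ne, Or.inl rfl⟩
                · exact Or.inl rfl
                · exact Or.inr ⟨hxm, Or.inr ⟨hxl, hxσ⟩⟩
            rw [heq] at this
            exact this hγ
    · -- m ∉ Skl σ0
      refine ⟨σ0, hσ0, fun x hx => ?_⟩
      exact Finset.mem_insert_of_mem (Finset.mem_erase.mpr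
        ⟨fun h => hmρ (h ▸ hx), hsub0 hx⟩)
end

section
/- Let Δ be a stable simplicial complex on [n]. Then every nonface σ ∈ ∇ admits a representation σ = σ_j ∪ τ′ where σ_j is a minimal nonface of Δ, σ_j ∩ τ′ = ∅ and every element of σ_j is smaller than every element of τ′; moreover such a representation is unique. -/
open MvPolynomial

/-- Existence part of Statement 16, by strong induction on the cardinality of `σ`. -/
lemma nonface_exists_decomposition {n : ℕ} (Δ : Set (Finset (Fin n)))
    (hst : IsStableComplex Δ) :
    ∀ N : ℕ, ∀ σ : Finset (Fin n), σ.card ≤ N → σ ∉ Δ →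
      ∃ σ1 τ : Finset (Fin n), IsMinNonface Δ σ1 ∧ σ = σ1 ∪ τ ∧ Disjoint σ1 τ ∧
        ∀ a ∈ σ1, ∀ b ∈ τ, a < b := by
  intro N
  induction N with
  | zero =>
      intro σ hcard hσ
      refine ⟨σ, ∅, ⟨hσ, ?_⟩, by simp, by simp, by simp⟩
      intro τ hτ
      exact absurd (Finset.card_eq_zero.mp (Nat.le_zero.mp hcard) ▸ hτ)
        (by simp)
  | succ N ih =>
      intro σ hcard hσ
      by_cases hmin : ∀ τ : Finset (Fin n), τ ⊂ σ → τ ∈ Δ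
      · exact ⟨σ, ∅, ⟨hσ, hmin⟩, by simp, by simp, by simp⟩
      · push_neg at hmin
        obtain ⟨τ0, hτ0ss, hτ0⟩ := hmin
        have hne : σ.Nonempty := by
          obtain ⟨a, ha, -⟩ := Finset.exists_of_ssubset hτ0ss
          exact ⟨a, ha⟩
        set m := σ.max' hne with hm
        have hmmem : m ∈ σ := σ.max'_mem hne
        have hmax : ∀ k ∈ σ, k ≤ m := fun k hk => σ.le_max' k hk
        -- nonfaces are upward closed
        have upclosed : ∀ ρ₁ ρ₂ : Finset (Fin n), ρ₁ ∉ Δ → ρ₁ ⊆ ρ₂ → ρ₂ ∉ Δ := by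
          intro ρ₁ ρ₂ h1 hsub h2
          exact h1 (hst.1.2 ρ₂ h2 ρ₁ hsub)
        -- σ.erase m is a nonface
        have herase : σ.erase m ∉ Δ := by
          obtain ⟨a, haσ, haτ0⟩ := Finset.exists_of_ssubset hτ0ss
          have hρ : σ.erase a ∉ Δ := by
            refine upclosed τ0 (σ.erase a) hτ0 ?_
            intro x hx
            exact Finset.mem_erase.mpr ⟨fun h => haτ0 (h ▸ hx), hτ0ss.1 hx⟩
          by_cases ham : a = m
          · exact ham ▸ hρ
          · have ham' : a < m := lt_of_le_of_ne (hmax a haσ) ham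
            have hm' : m ∈ σ.erase a := Finset.mem_erase.mpr ⟨Ne.symm ham, hmmem⟩
            have hstab := hst.2 (σ.erase a) hρ m a hm'
              (fun k hk => hmax k (Finset.mem_of_mem_erase hk)) ham'
              (by simp)
            have : insert a ((σ.erase a).erase m) = σ.erase m := by
              rw [Finset.erase_right_comm]
              exact Finset.insert_erase (Finset.mem_erase.mpr ⟨ham, haσ⟩)
            rwa [this] at hstab
        have hcard' : (σ.erase m).card ≤ N := by
          have := Finset.card_erase_of_mem hmmem
          omega
        obtain ⟨σ1, τ1, hmin1, heq1, hdisj1, hlt1⟩ := ih (σ.erase m) hcard' herase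
        refine ⟨σ1, insert m τ1, hmin1, ?_, ?_, ?_⟩
        · rw [Finset.union_insert, ← heq1, Finset.insert_erase hmmem]
        · rw [Finset.disjoint_insert_right]
          refine ⟨fun h => ?_, hdisj1⟩
          have : m ∈ σ.erase m := heq1 ▸ Finset.mem_union_left _ h
          exact (Finset.notMem_erase m σ) this
        · intro a ha b hb
          rcases Finset.mem_insert.mp hb with rfl | hb
          · have : a ∈ σ.erase m := heq1 ▸ Finset.mem_union_left _ ha
            exact lt_of_le_of_ne (hmax a (Finset.mem_of_mem_erase this))
              (Finset.mem_erase.mp this).1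
          · exact hlt1 a ha b hb

/-- If `Δ` is stable, every nonface `σ` has a unique representation
`σ = σ_j ∪ τ'` with `σ_j` a minimal nonface, `σ_j ∩ τ' = ∅` and `σ_j < τ'`
(every element of `σ_j` smaller than every element of `τ'`). -/
theorem nonface_unique_decomposition (n : ℕ) (Δ : Set (Finset (Fin n)))
    (hst : IsStableComplex Δ) (σ : Finset (Fin n)) (hσ : σ ∉ Δ) :
    ∃! p : Finset (Fin n) × Finset (Fin n),
      IsMinNonface Δ p.1 ∧ σ = p.1 ∪ p.2 ∧ Disjoint p.1 p.2 ∧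
        ∀ a ∈ p.1, ∀ b ∈ p.2, a < b := by
  obtain ⟨σ1, τ1, hmin1, heq1, hdisj1, hlt1⟩ :=
    nonface_exists_decomposition Δ hst σ.card σ le_rfl hσ
  refine ⟨(σ1, τ1), ⟨hmin1, heq1, hdisj1, hlt1⟩, ?_⟩
  -- uniqueness: any two such decompositions agree
  rintro ⟨σ2, τ2⟩ ⟨hmin2, heq2, hdisj2, hlt2⟩
  simp only [Prod.mk.injEq]
  -- first show σ2 = σ1
  have hsub : σ2 ⊆ σ1 ∨ σ1 ⊆ σ2 := by
    by_cases h : σ2 ⊆ σ1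
    · exact Or.inl h
    · right
      obtain ⟨a, haσ2, haσ1⟩ := Finset.not_subset.mp h
      have haτ1 : a ∈ τ1 := by
        have : a ∈ σ1 ∪ τ1 := heq1 ▸ heq2 ▸ Finset.mem_union_left _ haσ2
        exact (Finset.mem_union.mp this).resolve_left haσ1
      intro b hbσ1
      by_contra hbσ2
      have hbτ2 : b ∈ τ2 := by
        have : b ∈ σ2 ∪ τ2 := heq2 ▸ heq1 ▸ Finset.mem_union_left _ hbσ1
        exact (Finset.mem_union.mp this).resolve_left hbσ2
      exact absurd (hlt1 b hbσ1 a haτ1) (not_lt.mpr (le_of_lt (hlt2 a haσ2 b hbτ2)))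
  have hσeq : σ2 = σ1 := by
    rcases hsub with h | h
    · by_contra hne
      exact hmin2.1 (hmin1.2 σ2 (Finset.ssubset_iff_subset_ne.mpr ⟨h, hne⟩))
    · by_contra hne
      exact hmin1.1 (hmin2.2 σ1 (Finset.ssubset_iff_subset_ne.mpr ⟨h, Ne.symm hne⟩))
  refine ⟨hσeq, ?_⟩
  -- τ is determined: τ = σ \ σ1
  have key : ∀ (s t : Finset (Fin n)), σ = s ∪ t → Disjoint s t → t = σ \ s := by
    intro s t he hd
    ext x
    simp only [Finset.mem_sdiff, he, Finset.mem_union]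
    constructor
    · intro hx
      exact ⟨Or.inr hx, fun hs => Finset.disjoint_left.mp hd hs hx⟩
    · rintro ⟨hx | hx, hxs⟩
      · exact absurd hx hxs
      · exact hx
  rw [key σ2 τ2 heq2 hdisj2, key σ1 τ1 heq1 hdisj1, hσeq]
end
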